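/- arXiv:1012.2643 — 8 statements merged into one kernel-verified Lean document; each statement's English description precedes it below -/
import Mathlib

section
/- Let G be an undirected graph on {1,…,m} with edge set E. If Σ₁ and Σ₂ are positive definite real m×m matrices such that (Σ₁)_{ij} = (Σ₂)_{ij} for all (i,j) ∈ E (including all diagonal entries), and both inverses satisfy (Σ₁⁻¹)_{ij} = 0 and (Σ₂⁻¹)_{ij} = 0 for every pair i ≠ j with (i,j) ∉ E, then Σ₁ = Σ₂. (Uniqueness part of Dempster's theorem: the MLE is the unique positive definite completion whose inverse vanishes on non-edges.) -/
/-!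
Put `D = Σ₁ - Σ₂`. It vanishes on the edges and the diagonal, while `Σ₁⁻¹` and `Σ₂⁻¹` vanish
off them, so `tr (Σ₁⁻¹ D) = tr (Σ₂⁻¹ D) = 0`. The resolvent identity
`Σ₂⁻¹ - Σ₁⁻¹ = Σ₂⁻¹ D Σ₁⁻¹` turns this into `tr (Σ₂⁻¹ (D Σ₁⁻¹ D)) = 0`; as `D Σ₁⁻¹ D` is positive
semidefinite and `Σ₂⁻¹` positive definite, `D Σ₁⁻¹ D = 0`, hence `D = 0`.
-/

open scoped MatrixOrder ComplexOrder

namespace Matrix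

variable {n : Type*} [Fintype n] {𝕜 : Type*} [RCLike 𝕜] {A : Matrix n n 𝕜}

theorem PosDef.eq_zero_of_conjTranspose_mul_mul_same_eq_zero {m : Type*} (hA : A.PosDef)
    {B : Matrix n m 𝕜} (h : Bᴴ * A * B = 0) : B = 0 := by
  ext i j
  by_contra hij
  have hdiag : (Bᴴ * A * B) j j = star (Bᵀ j) ⬝ᵥ A *ᵥ Bᵀ j := by
    simp only [mul_apply, conjTranspose_apply, dotProduct, mulVec, transpose_apply, Pi.star_apply,
      Finset.mul_sum, Finset.sum_mul, mul_assoc]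
    exact Finset.sum_comm
  have hcol : Bᵀ j ≠ 0 := fun h0 => hij (congrFun h0 i)
  simpa [← hdiag, h] using hA.dotProduct_mulVec_pos hcol

theorem PosSemidef.eq_zero_of_trace_mul_eq_zero [DecidableEq n] {B : Matrix n n 𝕜}
    (hB : B.PosSemidef) (hA : A.PosDef) (h : (A * B).trace = 0) : B = 0 := by
  obtain ⟨C, rfl⟩ := CStarAlgebra.nonneg_iff_eq_star_mul_self.mp hB.nonneg
  rw [star_eq_conjTranspose] at h ⊢
  have hCAC := (hA.posSemidef.conjTranspose_mul_mul_same Cᴴ).trace_eq_zero_iff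
  rw [conjTranspose_conjTranspose, trace_mul_cycle, trace_mul_comm _ A, h] at hCAC
  have hC : Cᴴ = 0 := by
    refine hA.eq_zero_of_conjTranspose_mul_mul_same_eq_zero ?_
    rw [conjTranspose_conjTranspose]; exact hCAC.mp rfl
  rw [hC, zero_mul]

theorem PosDef.eq_of_trace_inv_mul_sub_eq_zero [DecidableEq n] {S T : Matrix n n 𝕜}
    (hS : S.PosDef) (hT : T.PosDef) (hStr : (S⁻¹ * (S - T)).trace = 0)
    (hTtr : (T⁻¹ * (S - T)).trace = 0) : S = T := by
  set D := S - T
  have hD : Dᴴ = D := (hS.isHermitian.sub hT.isHermitian).eq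
  have hresolvent : T⁻¹ - S⁻¹ = T⁻¹ * D * S⁻¹ := by
    simp only [nonsing_inv_eq_ringInverse]
    exact Ring.inverse_sub_inverse (iff_of_true hT.isUnit hS.isUnit)
  have htr : (T⁻¹ * (D * S⁻¹ * D)).trace = 0 := by
    rw [← mul_assoc, ← mul_assoc, ← hresolvent, sub_mul, trace_sub, hTtr, hStr, sub_zero]
  have hDSD : (Dᴴ * S⁻¹ * D).PosSemidef := hS.inv.posSemidef.conjTranspose_mul_mul_same D
  rw [hD] at hDSD
  exact sub_eq_zero.mp <| hS.inv.eq_zero_of_conjTranspose_mul_mul_same_eq_zero <| by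
    rw [hD]; exact hDSD.eq_zero_of_trace_mul_eq_zero hT.inv htr

end Matrix

theorem SimpleGraph.trace_mul_sub_eq_zero {n R : Type*} [Fintype n] [NonUnitalNonAssocRing R]
    (G : SimpleGraph n) {K S T : Matrix n n R}
    (hK : ∀ i j, i ≠ j → ¬G.Adj i j → K i j = 0) (hdiag : ∀ i, S i i = T i i)
    (hedge : ∀ i j, G.Adj i j → S i j = T i j) : (K * (S - T)).trace = 0 := by
  refine Finset.sum_eq_zero fun i _ => Finset.sum_eq_zero fun j _ => ?_
  rcases eq_or_ne i j with rfl | hij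
  · simp [hdiag]
  by_cases hadj : G.Adj i j
  · simp [hedge j i hadj.symm]
  · simp [hK i j hij hadj]

theorem dempster_uniqueness {m : ℕ} (G : SimpleGraph (Fin m))
    (Sigma1 Sigma2 : Matrix (Fin m) (Fin m) ℝ)
    (h1 : Sigma1.PosDef) (h2 : Sigma2.PosDef)
    (hdiag : ∀ i : Fin m, Sigma1 i i = Sigma2 i i)
    (hedge : ∀ i j : Fin m, G.Adj i j → Sigma1 i j = Sigma2 i j)
    (hz1 : ∀ i j : Fin m, i ≠ j → ¬ G.Adj i j → Sigma1⁻¹ i j = 0)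
    (hz2 : ∀ i j : Fin m, i ≠ j → ¬ G.Adj i j → Sigma2⁻¹ i j = 0) :
    Sigma1 = Sigma2 :=
  h1.eq_of_trace_inv_mul_sub_eq_zero h2 (G.trace_mul_sub_eq_zero hz1 hdiag hedge)
    (G.trace_mul_sub_eq_zero hz2 hdiag hedge)
end

section
/- Let G be an undirected graph on {1,…,m} with edge set E and let S be a real symmetric m×m matrix. If the G-partial matrix S_G admits a positive definite completion, then there exists a positive definite matrix Σ̂ with Σ̂_{ij} = S_{ij} for all (i,j) ∈ E and (Σ̂⁻¹)_{ij} = 0 for all i ≠ j with (i,j) ∉ E. (Existence part of Dempster's theorem: when the fiber of positive definite completions is nonempty, it meets the set of covariance matrices of the Gaussian graphical model on G.) -/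
/-!
Maximize the determinant over the positive semidefinite completions of `S_G`: this set is
compact, since fixing the diagonal bounds every entry. The maximum is at least the determinant
of the given positive definite completion, so the maximizer `A` is positive definite. For a
non-edge `{i, j}`, the matrices `A + t • (E_ij + E_ji)` are still completions for small `t`,
and the derivative of their determinant at `t = 0` is `det A * tr (A⁻¹ (E_ij + E_ji)) =
2 det A * A⁻¹ i j`, which therefore vanishes.
-/

open Matrix Filter Topology Polynomial

namespace Matrix

variable {n : Type*} [Fintype n]

theorem isClosed_setOf_posSemidef : IsClosed {A : Matrix n n ℝ | A.PosSemidef} := by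
  simp only [posSemidef_iff_dotProduct_mulVec, Set.ofPred_and, Set.ofPred_forall]
  exact (isClosed_eq continuous_id.matrix_conjTranspose continuous_id).inter <|
    isClosed_iInter fun x => isClosed_le continuous_const <|
      continuous_const.dotProduct (continuous_id.matrix_mulVec continuous_const)

theorem PosDef.eventually_posDef_of_isHermitian {A : Matrix n n ℝ} (hA : A.PosDef) :
    ∀ᶠ B in 𝓝 A, B.IsHermitian → B.PosDef := by
  have hquad : Continuous fun p : Matrix n n ℝ × (n → ℝ) => p.2 ⬝ᵥ p.1 *ᵥ p.2 :=
    continuous_snd.dotProduct (continuous_fst.matrix_mulVec continuous_snd)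
  have hsphere : ∀ᶠ B in 𝓝 A, ∀ y ∈ Metric.sphere (0 : n → ℝ) 1, 0 < y ⬝ᵥ B *ᵥ y := by
    refine (isCompact_sphere 0 1).eventually_forall_of_forall_eventually fun y hy => ?_
    have hpos : 0 < y ⬝ᵥ A *ᵥ y := by
      simpa using hA.dotProduct_mulVec_pos (ne_zero_of_mem_unit_sphere ⟨y, hy⟩)
    exact continuousAt_const.eventually_lt (f := fun _ => (0 : ℝ)) hquad.continuousAt hpos
  filter_upwards [hsphere] with B hB hBh
  refine posDef_iff_dotProduct_mulVec.mpr ⟨hBh, fun x hx => ?_⟩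
  have hnorm : 0 < ‖x‖ := norm_pos_iff.mpr hx
  have hscale : x ⬝ᵥ B *ᵥ x = ‖x‖ ^ 2 * ((‖x‖⁻¹ • x) ⬝ᵥ B *ᵥ (‖x‖⁻¹ • x)) := by
    rw [mulVec_smul, dotProduct_smul, smul_dotProduct, smul_eq_mul, smul_eq_mul]
    field_simp
  rw [star_trivial, hscale]
  exact mul_pos (by positivity) (hB _ (by simp [norm_smul, hnorm.ne']))

variable [DecidableEq n]

theorem PosSemidef.two_mul_abs_apply_le {A : Matrix n n ℝ} (hA : A.PosSemidef) (i j : n) :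
    2 * |A i j| ≤ A i i + A j j := by
  have hsymm : A j i = A i j := by simpa using hA.1.apply i j
  have hquad (s : ℝ) : 0 ≤ A i i + 2 * s * A i j + s ^ 2 * A j j := by
    have h := hA.dotProduct_mulVec_nonneg (Pi.single i 1 + s • Pi.single j 1)
    simp only [star_trivial, mulVec_add, mulVec_smul, mulVec_single, MulOpposite.op_one,
      one_smul, dotProduct_add, add_dotProduct, single_dotProduct, smul_dotProduct,
      dotProduct_smul, col_apply, one_mul, smul_eq_mul, hsymm] at h
    linarith
  rcases abs_cases (A i j) with ⟨h, -⟩ | ⟨h, -⟩ <;> nlinarith [hquad 1, hquad (-1)]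

theorem hasDerivAt_det_one_add_smul (M : Matrix n n ℝ) :
    HasDerivAt (fun t : ℝ => (1 + t • M).det) M.trace 0 := by
  have hpoly : (fun t : ℝ => (1 + t • M).det) =
      fun t => (det (1 + (X : ℝ[X]) • M.map C)).eval t := by
    funext t
    simp [eval_det, ← smul_eq_mul_diagonal]
  rw [hpoly, ← derivative_det_one_add_X_smul]
  exact Polynomial.hasDerivAt _ 0

theorem trace_inv_mul_eq_zero_of_isLocalMax_det {A H : Matrix n n ℝ} (hA : IsUnit A.det)
    (hmax : IsLocalMax (fun t : ℝ => (A + t • H).det) 0) : (A⁻¹ * H).trace = 0 := by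
  have hfactor : (fun t : ℝ => (A + t • H).det) =
      fun t => A.det * (1 + t • (A⁻¹ * H)).det := by
    funext t
    rw [← det_mul, mul_add, mul_one, Matrix.mul_smul, mul_nonsing_inv_cancel_left _ _ hA]
  rw [hfactor] at hmax
  have hderiv := (hasDerivAt_det_one_add_smul (A⁻¹ * H)).const_mul A.det
  exact (mul_eq_zero.mp (hmax.hasDerivAt_eq_zero hderiv)).resolve_left hA.ne_zero

end Matrix

section Completions

variable {n : Type*} [Fintype n]

def posSemidefCompletions (G : SimpleGraph n) (S : Matrix n n ℝ) : Set (Matrix n n ℝ) :=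
  {A | A.PosSemidef ∧ (∀ i, A i i = S i i) ∧ ∀ i j, G.Adj i j → A i j = S i j}

variable [DecidableEq n]

theorem isCompact_posSemidefCompletions (G : SimpleGraph n) (S : Matrix n n ℝ) :
    IsCompact (posSemidefCompletions G S) := by
  have hclosed : IsClosed (posSemidefCompletions G S) := by
    simp only [posSemidefCompletions, Set.ofPred_and, Set.ofPred_forall]
    exact isClosed_setOf_posSemidef.inter <|
      (isClosed_iInter fun i => isClosed_eq (by fun_prop) continuous_const).inter <|
        isClosed_iInter fun i => isClosed_iInter fun j => isClosed_iInter fun _ =>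
          isClosed_eq (by fun_prop) continuous_const
  have hbox : IsCompact (Set.univ.pi fun i => Set.univ.pi fun j =>
      Set.Icc (-((S i i + S j j) / 2)) ((S i i + S j j) / 2) : Set (Matrix n n ℝ)) :=
    isCompact_univ_pi fun _ => isCompact_univ_pi fun _ => isCompact_Icc
  refine hbox.of_isClosed_subset hclosed fun A ⟨hA, hdiag, _⟩ i _ j _ => ?_
  have h := hA.two_mul_abs_apply_le i j
  rw [hdiag, hdiag] at h
  exact abs_le.mp (by linarith)

theorem inv_apply_eq_zero_of_isMaxOn_det {G : SimpleGraph n} {S A : Matrix n n ℝ}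
    (hA : A.PosDef) (hmax : IsMaxOn det (posSemidefCompletions G S) A)
    (hcompl : A ∈ posSemidefCompletions G S) {i j : n} (hij : i ≠ j) (hadj : ¬G.Adj i j) :
    A⁻¹ i j = 0 := by
  set H : Matrix n n ℝ := single i j 1 + single j i 1
  have hH : H.IsHermitian := by simp [H, IsHermitian, add_comm]
  have hHzero {k l : n} (hk : ¬(i = k ∧ j = l)) (hl : ¬(j = k ∧ i = l)) : H k l = 0 := by
    simp only [H, Matrix.add_apply, single_apply_of_ne _ _ _ _ _ hk,
      single_apply_of_ne _ _ _ _ _ hl, add_zero]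
  have hHdiag (k : n) : H k k = 0 :=
    hHzero (fun h => hij (h.1.trans h.2.symm)) (fun h => hij (h.2.trans h.1.symm))
  have hHadj {k l : n} (hkl : G.Adj k l) : H k l = 0 :=
    hHzero (fun ⟨hk, hl⟩ => hadj (hk ▸ hl ▸ hkl)) (fun ⟨hk, hl⟩ => hadj (hk ▸ hl ▸ hkl.symm))
  have hnear : ∀ᶠ t in 𝓝 (0 : ℝ), A + t • H ∈ posSemidefCompletions G S := by
    have hlim : Tendsto (fun t : ℝ => A + t • H) (𝓝 0) (𝓝 A) := by
      have hcont : Continuous fun t : ℝ => A + t • H := by fun_prop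
      simpa using hcont.tendsto 0
    filter_upwards [hlim.eventually hA.eventually_posDef_of_isHermitian] with t ht
    refine ⟨(ht (hA.1.add (hH.smul (.all t)))).posSemidef, fun k => ?_, fun k l hkl => ?_⟩
    · simp [hHdiag, hcompl.2.1 k]
    · simp [hHadj hkl, hcompl.2.2 k l hkl]
  have htrace := trace_inv_mul_eq_zero_of_isLocalMax_det hA.det_pos.ne'.isUnit
    (hnear.mono fun t ht => by simpa using hmax ht)
  have hsymm : A⁻¹ j i = A⁻¹ i j := by simpa using hA.inv.1.apply i j
  simp only [H, mul_add, trace_add, trace_mul_single, MulOpposite.op_one, one_smul, hsymm]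
    at htrace
  linarith

end Completions

theorem dempster_existence_general {m : ℕ} (G : SimpleGraph (Fin m))
    (S : Matrix (Fin m) (Fin m) ℝ)
    (hcompl : ∃ Sigma : Matrix (Fin m) (Fin m) ℝ, Sigma.PosDef ∧
      (∀ i : Fin m, Sigma i i = S i i) ∧
      (∀ i j : Fin m, G.Adj i j → Sigma i j = S i j)) :
    ∃ SigmaHat : Matrix (Fin m) (Fin m) ℝ, SigmaHat.PosDef ∧
      (∀ i : Fin m, SigmaHat i i = S i i) ∧
      (∀ i j : Fin m, G.Adj i j → SigmaHat i j = S i j) ∧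
      (∀ i j : Fin m, i ≠ j → ¬ G.Adj i j → SigmaHat⁻¹ i j = 0) := by
  obtain ⟨T, hT, hTdiag, hTadj⟩ := hcompl
  have hTcompl : T ∈ posSemidefCompletions G S := ⟨hT.posSemidef, hTdiag, hTadj⟩
  obtain ⟨A, hA, hmax⟩ := (isCompact_posSemidefCompletions G S).exists_isMaxOn ⟨T, hTcompl⟩
    continuous_id.matrix_det.continuousOn
  have hApd : A.PosDef :=
    hA.1.posDef_iff_det_ne_zero.mpr (hT.det_pos.trans_le (hmax hTcompl)).ne'
  exact ⟨A, hApd, hA.2.1, hA.2.2, fun i j hij hadj =>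
    inv_apply_eq_zero_of_isMaxOn_det hApd hmax hA hij hadj⟩

theorem dempster_existence {m : ℕ} (G : SimpleGraph (Fin m))
    (S : Matrix (Fin m) (Fin m) ℝ) (hS : S.IsSymm)
    (hcompl : ∃ Sigma : Matrix (Fin m) (Fin m) ℝ, Sigma.PosDef ∧
      (∀ i : Fin m, Sigma i i = S i i) ∧
      (∀ i j : Fin m, G.Adj i j → Sigma i j = S i j)) :
    ∃ SigmaHat : Matrix (Fin m) (Fin m) ℝ, SigmaHat.PosDef ∧
      (∀ i : Fin m, SigmaHat i i = S i i) ∧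
      (∀ i j : Fin m, G.Adj i j → SigmaHat i j = S i j) ∧
      (∀ i j : Fin m, i ≠ j → ¬ G.Adj i j → SigmaHat⁻¹ i j = 0) :=
  dempster_existence_general G S hcompl
end

section
/- Let G be an undirected graph on {1,…,m} with edge set E, let S be a real symmetric positive semidefinite m×m matrix, and let 𝒦_G = {K positive definite : K_{ij} = 0 for all i ≠ j with (i,j) ∉ E}. Then the log-likelihood function ℓ(K) = log det K − trace(K S) attains its supremum over 𝒦_G if and only if the G-partial matrix S_G has a positive definite completion; moreover, any maximizer K̂ satisfies (K̂⁻¹)_{ij} = S_{ij} for all (i,j) ∈ E. -/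
/-!
On the cone, `tr (K S)` only involves the diagonal of `S` and the entries `S_ij` with
`(i,j) ∈ E`, so `S` may be replaced by any matrix `Σ` agreeing with it there. At a maximizer `K̂`
the line `K̂ + t B`, `B = E_ij + E_ji` with `i = j` or `(i,j) ∈ E`, stays in the cone for small `t`,
and the derivative `tr (K̂⁻¹ B) − tr (B S)` of the log-likelihood along it vanishes:
`(K̂⁻¹)_ij = S_ij`, so `K̂⁻¹` is a positive definite completion. Conversely, if `Σ ≥ a • 1`
(`a > 0`) is a positive definite completion, then `log det K ≤ (a/2) tr K + const` shows that a
superlevel set of `log det K − tr (K Σ)` on the cone has bounded trace and determinant bounded away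
from `0`; it is therefore compact and the maximum is attained.
-/

/-- The cone of concentration matrices of the Gaussian graphical model on `G`:
positive definite matrices vanishing at all non-edges `i ≠ j`. -/
def concentrationCone {m : ℕ} (G : SimpleGraph (Fin m)) :
    Set (Matrix (Fin m) (Fin m) ℝ) :=
  {K | K.PosDef ∧ ∀ i j : Fin m, i ≠ j → ¬ G.Adj i j → K i j = 0}

/-- The log-likelihood (up to constants) of a concentration matrix `K` given the
sample covariance matrix `S`. -/
noncomputable def logLik {m : ℕ} (S K : Matrix (Fin m) (Fin m) ℝ) : ℝ :=
  Real.log K.det - (K * S).trace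

open Matrix Filter Topology Real
open scoped MatrixOrder

section PositiveMatrices

variable {n : Type*} [Fintype n]

lemma Matrix.PosSemidef.trace_mul_nonneg {A B : Matrix n n ℝ} (hA : A.PosSemidef)
    (hB : B.PosSemidef) : 0 ≤ (A * B).trace := by
  classical
  obtain ⟨R, rfl⟩ := CStarAlgebra.nonneg_iff_eq_star_mul_self.mp hA.nonneg
  rw [Matrix.mul_assoc, trace_mul_comm]
  exact (hB.mul_mul_conjTranspose_same R).trace_nonneg

lemma Matrix.PosSemidef.trace_mul_le_trace_mul {A B C : Matrix n n ℝ} (hA : A.PosSemidef)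
    (hBC : B ≤ C) : (A * B).trace ≤ (A * C).trace := by
  simpa [Matrix.mul_sub, trace_sub] using hA.trace_mul_nonneg hBC

lemma Matrix.PosSemidef.two_mul_abs_apply_le_s2 {A : Matrix n n ℝ} (hA : A.PosSemidef) (i j : n) :
    2 * |A i j| ≤ A i i + A j j := by
  classical
  have hplus := hA.dotProduct_mulVec_nonneg (Pi.single i 1 + Pi.single j 1)
  have hminus := hA.dotProduct_mulVec_nonneg (Pi.single i 1 - Pi.single j 1)
  have hsymm : A j i = A i j := by simpa using hA.1.apply i j
  simp only [star_trivial, mulVec_add, mulVec_sub, mulVec_single, MulOpposite.op_one, one_smul,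
    dotProduct_add, dotProduct_sub, add_dotProduct, sub_dotProduct, single_dotProduct, col_apply,
    one_mul, hsymm] at hplus hminus
  rcases abs_cases (A i j) with ⟨h, -⟩ | ⟨h, -⟩ <;> rw [h] <;> linarith

lemma Matrix.PosSemidef.abs_apply_le_trace {A : Matrix n n ℝ} (hA : A.PosSemidef) (i j : n) :
    |A i j| ≤ A.trace := by
  have hdiag (k : n) : A k k ≤ A.trace :=
    Finset.single_le_sum (f := fun k => A k k) (fun k _ => hA.diag_nonneg) (Finset.mem_univ k)
  linarith [hA.two_mul_abs_apply_le_s2 i j, hdiag i, hdiag j]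

lemma Matrix.isClosed_setOf_posSemidef_s2 : IsClosed {A : Matrix n n ℝ | A.PosSemidef} := by
  simp only [posSemidef_iff_dotProduct_mulVec, Set.ofPred_and, Set.ofPred_forall]
  exact (isClosed_eq continuous_id.matrix_conjTranspose continuous_id).inter <|
    isClosed_iInter fun x => isClosed_le continuous_const
      (continuous_const.dotProduct (continuous_id.matrix_mulVec continuous_const))

lemma Matrix.isCompact_setOf_posSemidef_trace_le (C : ℝ) :
    IsCompact {A : Matrix n n ℝ | A.PosSemidef ∧ A.trace ≤ C} := by
  refine (isCompact_univ_pi fun _ => isCompact_univ_pi fun _ => isCompact_Icc (a := -C) (b := C))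
    |>.of_isClosed_subset ?_ ?_
  · exact isClosed_setOf_posSemidef_s2.inter (isClosed_le continuous_id.matrix_trace continuous_const)
  · rintro A ⟨hA, hAC⟩ i - j -
    exact abs_le.mp ((hA.abs_apply_le_trace i j).trans hAC)

variable [DecidableEq n]

lemma Matrix.PosDef.exists_pos_smul_one_le {A : Matrix n n ℝ} (hA : A.PosDef) :
    ∃ a : ℝ, 0 < a ∧ a • (1 : Matrix n n ℝ) ≤ A := by
  cases isEmpty_or_nonempty n
  · exact ⟨1, one_pos, by simp [Subsingleton.elim (α := Matrix n n ℝ) _ A]⟩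
  · simpa [Algebra.algebraMap_eq_smul_one] using
      (CFC.exists_pos_algebraMap_le_iff hA.isHermitian.isSelfAdjoint).2
        fun x hx => hA.isStrictlyPositive.spectrum_pos hx

lemma Matrix.IsHermitian.exists_abs_le_smul_one {B : Matrix n n ℝ} (hB : B.IsHermitian) :
    ∃ c : ℝ, -(c • 1) ≤ B ∧ B ≤ c • (1 : Matrix n n ℝ) := by
  obtain ⟨c, hc⟩ := (finite_real_spectrum (A := B)).image abs |>.bddAbove
  have hle : ∀ x ∈ spectrum ℝ B, |x| ≤ c := fun x hx => hc ⟨x, hx, rfl⟩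
  refine ⟨c, ?_, ?_⟩
  · simpa [Algebra.algebraMap_eq_smul_one] using
      algebraMap_le_of_le_spectrum (a := B) (r := -c) fun x hx => neg_le_of_abs_le (hle x hx)
  · simpa [Algebra.algebraMap_eq_smul_one] using
      le_algebraMap_of_spectrum_le (a := B) (r := c) fun x hx => le_of_abs_le (hle x hx)

lemma Matrix.PosDef.eventually_posDef_add_smul {K B : Matrix n n ℝ} (hK : K.PosDef)
    (hB : B.IsHermitian) : ∀ᶠ t in 𝓝 (0 : ℝ), (K + t • B).PosDef := by
  obtain ⟨a, ha, haK⟩ := hK.exists_pos_smul_one_le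
  obtain ⟨c, hcB, hBc⟩ := hB.exists_abs_le_smul_one
  have hsmall : ∀ᶠ t in 𝓝 (0 : ℝ), |t| * c < a :=
    ((continuous_abs.mul continuous_const).tendsto' 0 0 (by simp)).eventually (gt_mem_nhds ha)
  filter_upwards [hsmall] with t ht
  have htB : -((|t| * c) • (1 : Matrix n n ℝ)) ≤ t • B := by
    rcases le_total 0 t with h | h
    · rw [abs_of_nonneg h, mul_smul, ← smul_neg]
      exact smul_le_smul_of_nonneg_left hcB h
    · rw [abs_of_nonpos h, mul_smul, ← smul_neg, ← neg_smul_neg t B]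
      exact smul_le_smul_of_nonneg_left (neg_le_neg hBc) (neg_nonneg.mpr h)
  have hlow : (a - |t| * c) • (1 : Matrix n n ℝ) ≤ K + t • B := by
    rw [sub_smul, sub_eq_add_neg]
    exact add_le_add haK htB
  simpa using (PosDef.one.smul (sub_pos.mpr ht)).add_posSemidef hlow

lemma Matrix.PosDef.log_det_le {K : Matrix n n ℝ} (hK : K.PosDef) :
    log K.det ≤ K.trace - Fintype.card n := by
  have hdet : K.det = ∏ i, hK.1.eigenvalues i := by simpa using hK.1.det_eq_prod_eigenvalues
  have htr : K.trace = ∑ i, hK.1.eigenvalues i := by simpa using hK.1.trace_eq_sum_eigenvalues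
  rw [hdet, htr, log_prod fun i _ => (hK.eigenvalues_pos i).ne']
  calc ∑ i, log (hK.1.eigenvalues i) ≤ ∑ i, (hK.1.eigenvalues i - 1) :=
        Finset.sum_le_sum fun i _ => log_le_sub_one_of_pos (hK.eigenvalues_pos i)
    _ = _ := by simp [Finset.sum_sub_distrib]

lemma Matrix.PosDef.log_det_le_mul_trace {K : Matrix n n ℝ} (hK : K.PosDef) {s : ℝ}
    (hs : 0 < s) : log K.det ≤ s * K.trace - Fintype.card n * (1 + log s) := by
  have h := (hK.smul hs).log_det_le
  rw [det_smul, trace_smul, smul_eq_mul, log_mul (pow_pos hs _).ne' hK.det_pos.ne',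
    log_pow] at h
  linarith

end PositiveMatrices

section Derivatives

open Polynomial

variable {n : Type*} [Fintype n] [DecidableEq n]

lemma Matrix.hasDerivAt_det_one_add_smul_s2 (M : Matrix n n ℝ) :
    HasDerivAt (fun t : ℝ => (1 + t • M).det) M.trace 0 := by
  have h (t : ℝ) : (1 + t • M).det = (det (1 + (X : ℝ[X]) • M.map C)).eval t := by
    simp [eval_det, ← smul_eq_mul_diagonal]
  rw [funext h, ← derivative_det_one_add_X_smul]
  exact Polynomial.hasDerivAt _ 0

lemma Matrix.hasDerivAt_det_add_smul {K : Matrix n n ℝ} (hK : IsUnit K.det) (B : Matrix n n ℝ) :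
    HasDerivAt (fun t : ℝ => (K + t • B).det) (K.det * (K⁻¹ * B).trace) 0 := by
  have h (t : ℝ) : (K + t • B).det = K.det * (1 + t • (K⁻¹ * B)).det := by
    rw [← det_mul, Matrix.mul_add, mul_one, mul_smul_comm, mul_nonsing_inv_cancel_left _ _ hK]
  simpa [funext h] using (hasDerivAt_det_one_add_smul_s2 (K⁻¹ * B)).const_mul K.det

end Derivatives

def IsSupportedOn {V : Type*} (G : SimpleGraph V) (K : Matrix V V ℝ) : Prop :=
  ∀ i j, i ≠ j → ¬ G.Adj i j → K i j = 0

lemma isClosed_setOf_isSupportedOn {V : Type*} (G : SimpleGraph V) :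
    IsClosed {K : Matrix V V ℝ | IsSupportedOn G K} := by
  simp only [IsSupportedOn, Set.ofPred_forall]
  exact isClosed_iInter fun i => isClosed_iInter fun j => isClosed_iInter fun _ =>
    isClosed_iInter fun _ => isClosed_eq (by fun_prop) continuous_const

section GaussianGraphicalModel

variable {m : ℕ}

lemma one_mem_concentrationCone (G : SimpleGraph (Fin m)) :
    (1 : Matrix (Fin m) (Fin m) ℝ) ∈ concentrationCone G :=
  ⟨PosDef.one, fun _ _ hij _ => one_apply_ne hij⟩

lemma eventually_add_smul_mem_concentrationCone {G : SimpleGraph (Fin m)}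
    {K B : Matrix (Fin m) (Fin m) ℝ} (hK : K ∈ concentrationCone G) (hB : B.IsHermitian)
    (hBG : IsSupportedOn G B) : ∀ᶠ t in 𝓝 (0 : ℝ), K + t • B ∈ concentrationCone G := by
  filter_upwards [hK.1.eventually_posDef_add_smul hB] with t ht
  exact ⟨ht, fun i j hij hadj => by simp [hK.2 i j hij hadj, hBG i j hij hadj]⟩

lemma hasDerivAt_logLik_add_smul (S : Matrix (Fin m) (Fin m) ℝ) {K : Matrix (Fin m) (Fin m) ℝ}
    (hK : K.det ≠ 0) (B : Matrix (Fin m) (Fin m) ℝ) :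
    HasDerivAt (fun t : ℝ => logLik S (K + t • B)) ((K⁻¹ * B).trace - (B * S).trace) 0 := by
  have hlog : HasDerivAt (fun t : ℝ => log (K + t • B).det) (K⁻¹ * B).trace 0 := by
    simpa [hK] using (hasDerivAt_det_add_smul hK.isUnit B).log (by simpa using hK)
  have htr : HasDerivAt (fun t : ℝ => ((K + t • B) * S).trace) (B * S).trace 0 := by
    simpa [Matrix.add_mul, trace_add] using
      (hasDerivAt_mul_const (B * S).trace).const_add (K * S).trace
  exact hlog.sub htr

lemma trace_inv_mul_eq_of_isMaxOn {G : SimpleGraph (Fin m)} {S K B : Matrix (Fin m) (Fin m) ℝ}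
    (hK : K ∈ concentrationCone G) (hmax : IsMaxOn (logLik S) (concentrationCone G) K)
    (hB : B.IsHermitian) (hBG : IsSupportedOn G B) : (K⁻¹ * B).trace = (B * S).trace := by
  have hloc : IsLocalMax (fun t : ℝ => logLik S (K + t • B)) 0 :=
    (eventually_add_smul_mem_concentrationCone hK hB hBG).mono fun t ht => by
      simpa using hmax ht
  exact sub_eq_zero.mp (hloc.hasDerivAt_eq_zero (hasDerivAt_logLik_add_smul S hK.1.det_pos.ne' B))

lemma isSupportedOn_single_add_single {V : Type*} [DecidableEq V] {G : SimpleGraph V} {i j : V}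
    (hij : i = j ∨ G.Adj i j) : IsSupportedOn G (single i j (1 : ℝ) + single j i 1) := by
  intro a b hab hadj
  rcases hij with rfl | hij <;> simp only [Matrix.add_apply, single_apply] <;>
    grind [SimpleGraph.Adj.symm]

lemma inv_apply_eq_of_isMaxOn {G : SimpleGraph (Fin m)} {S K : Matrix (Fin m) (Fin m) ℝ}
    (hS : S.IsHermitian) (hK : K ∈ concentrationCone G)
    (hmax : IsMaxOn (logLik S) (concentrationCone G) K) {i j : Fin m} (hij : i = j ∨ G.Adj i j) :
    K⁻¹ i j = S i j := by
  have hB : (single i j (1 : ℝ) + single j i 1).IsHermitian := by simp [IsHermitian, add_comm]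
  have h := trace_inv_mul_eq_of_isMaxOn hK hmax hB (isSupportedOn_single_add_single hij)
  have hKinv : K⁻¹ j i = K⁻¹ i j := by simpa using hK.1.1.inv.apply i j
  have hSji : S j i = S i j := by simpa using hS.apply i j
  simp only [Matrix.mul_add, Matrix.add_mul, trace_add, trace_mul_single, trace_single_mul,
    MulOpposite.op_one, one_smul, hKinv, hSji] at h
  linarith

lemma logLik_congr_of_isSupportedOn {G : SimpleGraph (Fin m)}
    {S Sigma K : Matrix (Fin m) (Fin m) ℝ} (hdiag : ∀ i, Sigma i i = S i i)
    (hadj : ∀ i j, G.Adj i j → Sigma i j = S i j) (hK : IsSupportedOn G K) :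
    logLik Sigma K = logLik S K := by
  simp only [logLik, trace, diag, mul_apply]
  congr 1
  refine Finset.sum_congr rfl fun i _ => Finset.sum_congr rfl fun j _ => ?_
  rcases eq_or_ne j i with rfl | hne
  · rw [hdiag]
  · by_cases hji : G.Adj j i
    · rw [hadj j i hji]
    · rw [hK i j hne.symm (fun h => hji h.symm), zero_mul, zero_mul]

lemma logLik_le_log_det {S K : Matrix (Fin m) (Fin m) ℝ} (hS : S.PosSemidef)
    (hK : K.PosSemidef) : logLik S K ≤ log K.det :=
  sub_le_self _ (hK.trace_mul_nonneg hS)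

lemma exists_trace_le_of_le_logLik {Sigma : Matrix (Fin m) (Fin m) ℝ} (hSigma : Sigma.PosDef)
    (c : ℝ) :
    ∃ C, ∀ K : Matrix (Fin m) (Fin m) ℝ, K.PosDef → c ≤ logLik Sigma K → K.trace ≤ C := by
  obtain ⟨a, ha, haSigma⟩ := hSigma.exists_pos_smul_one_le
  refine ⟨(-c - m * (1 + log (a / 2))) / (a / 2), fun K hK hc => ?_⟩
  have hdet := hK.log_det_le_mul_trace (half_pos ha)
  have htr : a * K.trace ≤ (K * Sigma).trace := by
    simpa [mul_comm] using hK.posSemidef.trace_mul_le_trace_mul haSigma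
  rw [le_div_iff₀ (half_pos ha)]
  simp only [logLik, Fintype.card_fin] at hc hdet
  linarith

lemma continuousOn_logLik (S : Matrix (Fin m) (Fin m) ℝ) :
    ContinuousOn (logLik S) {K | K.det ≠ 0} :=
  (continuous_id.matrix_det.continuousOn.log fun _ hK => hK).sub
    (continuous_id.matrix_mul continuous_const).matrix_trace.continuousOn

lemma exists_isMaxOn_logLik (G : SimpleGraph (Fin m)) {Sigma : Matrix (Fin m) (Fin m) ℝ}
    (hSigma : Sigma.PosDef) :
    ∃ K ∈ concentrationCone G, IsMaxOn (logLik Sigma) (concentrationCone G) K := by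
  set c := logLik Sigma 1
  obtain ⟨C, hC⟩ := exists_trace_le_of_le_logLik hSigma c
  set T := {K : Matrix (Fin m) (Fin m) ℝ | K.PosSemidef ∧ K.trace ≤ C} ∩
    {K | IsSupportedOn G K ∧ exp c ≤ K.det}
  have hT : IsCompact T := (isCompact_setOf_posSemidef_trace_le C).inter_right <|
    (isClosed_setOf_isSupportedOn G).inter (isClosed_le continuous_const continuous_id.matrix_det)
  have hsub : ∀ K ∈ concentrationCone G, c ≤ logLik Sigma K → K ∈ T := fun K hK hc =>
    ⟨⟨hK.1.posSemidef, hC K hK.1 hc⟩, hK.2,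
      (exp_le_exp.mpr (hc.trans (logLik_le_log_det hSigma.posSemidef hK.1.posSemidef))).trans_eq
        (exp_log hK.1.det_pos)⟩
  have hone : (1 : Matrix (Fin m) (Fin m) ℝ) ∈ T := hsub 1 (one_mem_concentrationCone G) le_rfl
  have hdet_pos : ∀ K ∈ T, 0 < K.det := fun K hK => (exp_pos c).trans_le hK.2.2
  obtain ⟨K, hKT, hmax⟩ := hT.exists_isMaxOn ⟨1, hone⟩
    ((continuousOn_logLik Sigma).mono fun K hK => (hdet_pos K hK).ne')
  have hK : K ∈ concentrationCone G :=
    ⟨hKT.1.1.posDef_iff_det_ne_zero.mpr (hdet_pos K hKT).ne', hKT.2.1⟩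
  refine ⟨K, hK, fun K' hK' => ?_⟩
  by_cases hc : c ≤ logLik Sigma K'
  · exact hmax (hsub K' hK' hc)
  · exact (not_le.mp hc).le.trans (hmax hone)

end GaussianGraphicalModel

theorem loglik_attains_sup_iff_pd_completion {m : ℕ} (G : SimpleGraph (Fin m))
    (S : Matrix (Fin m) (Fin m) ℝ) (hS : S.PosSemidef) :
    ((∃ Khat ∈ concentrationCone G,
        ∀ K ∈ concentrationCone G, logLik S K ≤ logLik S Khat) ↔
      (∃ Sigma : Matrix (Fin m) (Fin m) ℝ, Sigma.PosDef ∧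
        (∀ i : Fin m, Sigma i i = S i i) ∧
        (∀ i j : Fin m, G.Adj i j → Sigma i j = S i j))) ∧
    (∀ Khat ∈ concentrationCone G,
      (∀ K ∈ concentrationCone G, logLik S K ≤ logLik S Khat) →
        (∀ i : Fin m, Khat⁻¹ i i = S i i) ∧
        (∀ i j : Fin m, G.Adj i j → Khat⁻¹ i j = S i j)) := by
  have hinv : ∀ Khat ∈ concentrationCone G,
      (∀ K ∈ concentrationCone G, logLik S K ≤ logLik S Khat) →
        (∀ i : Fin m, Khat⁻¹ i i = S i i) ∧ (∀ i j : Fin m, G.Adj i j → Khat⁻¹ i j = S i j) :=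
    fun Khat hKhat hmax =>
      ⟨fun _ => inv_apply_eq_of_isMaxOn hS.1 hKhat hmax (Or.inl rfl),
        fun _ _ hij => inv_apply_eq_of_isMaxOn hS.1 hKhat hmax (Or.inr hij)⟩
  refine ⟨⟨fun ⟨Khat, hKhat, hmax⟩ => ⟨Khat⁻¹, hKhat.1.inv, hinv Khat hKhat hmax⟩, ?_⟩, hinv⟩
  rintro ⟨Sigma, hSigma, hdiag, hadj⟩
  obtain ⟨Khat, hKhat, hmax⟩ := exists_isMaxOn_logLik G hSigma
  refine ⟨Khat, hKhat, fun K hK => ?_⟩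
  rw [← logLik_congr_of_isSupportedOn hdiag hadj hK.2,
    ← logLik_congr_of_isSupportedOn hdiag hadj hKhat.2]
  exact hmax hK
end

section
/- Let G be a chordal graph on {1,…,m} with edge set E. Then every G-partial matrix all of whose submatrices corresponding to cliques of G are positive definite has a positive definite completion. Precisely: if M is a real symmetric m×m matrix such that for every clique C of G the principal submatrix M_{C×C} is positive definite, then there exists a positive definite matrix Σ with Σ_{ij} = M_{ij} for all (i,j) ∈ E. -/
/-!
Induction on the number of vertices. If `G` is complete, `M` itself is positive definite.
Otherwise take non-adjacent `a, b` and an inclusion-minimal vertex set `S` separating them. Every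
`s ∈ S` has neighbours in the components of both `a` and `b` in `G - S`, so two non-adjacent
`s, t ∈ S` would be joined by shortest paths through either component, and these close up to a
chordless cycle of length at least four; hence `S` is a clique. Let `A` be the component of `a`
together with `S`, and `B` the complement of that component. Every edge lies inside `A` or inside
`B`, and `A ∩ B = S` is a clique, so the completions of `M` on `A` and on `B` given by induction
agree on `A ∩ B`. They glue: filling the missing block with `N_{A,S} N_{S,S}⁻¹ N_{S,B∖A}` makes
the Schur complement of the `A`-block equal to the Schur complement of the `S`-block in the
`B`-completion, which is positive definite.
-/

/-- A graph is chordal if it has no chordless (induced) cycle of length greater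
than 3, i.e. no induced subgraph which is a cycle on `n ≥ 4` vertices. -/
def SimpleGraph.IsChordal {V : Type*} (G : SimpleGraph V) : Prop :=
  ¬ ∃ (n : ℕ) (v : Fin n → V), 4 ≤ n ∧ Function.Injective v ∧
    ∀ i j : Fin n, G.Adj (v i) (v j) ↔
      ((i.val + 1) % n = j.val ∨ (j.val + 1) % n = i.val)

open scoped ComplexOrder

namespace Matrix

section Glue

variable {𝕜 X S Q : Type*} [RCLike 𝕜]

theorem IsHermitian.fromBlocks_toBlocks {B : Matrix (S ⊕ Q) (S ⊕ Q) 𝕜} (hB : B.IsHermitian) :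
    Matrix.fromBlocks B.toBlocks₁₁ B.toBlocks₁₂ B.toBlocks₁₂ᴴ B.toBlocks₂₂ = B := by
  conv_rhs => rw [← Matrix.fromBlocks_toBlocks B]
  congr 1
  ext i j
  exact congrFun₂ hB (.inr i) (.inl j)

variable [Fintype X] [DecidableEq X]

theorem conjTranspose_one_submatrix_mul (f : S → X) (M : Matrix X Q 𝕜) :
    ((1 : Matrix X X 𝕜).submatrix id f)ᴴ * M = M.submatrix f id := by
  simpa [conjTranspose_submatrix] using one_submatrix_mul f (Equiv.refl X) M

theorem submatrix_eq_conjTranspose_mul_mul (A : Matrix X X 𝕜) (f : S → X) :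
    A.submatrix f f =
      ((1 : Matrix X X 𝕜).submatrix id f)ᴴ * A * (1 : Matrix X X 𝕜).submatrix id f := by
  rw [conjTranspose_one_submatrix_mul]
  simpa using (mul_submatrix_one (Equiv.refl X) f (A.submatrix f id)).symm

variable [Fintype Q] [DecidableEq Q]

theorem posDef_fromBlocks₁₁_iff {A : Matrix X X 𝕜} (B : Matrix X Q 𝕜) (D : Matrix Q Q 𝕜)
    (hA : A.PosDef) [Invertible A] :
    (fromBlocks A B Bᴴ D).PosDef ↔ (D - Bᴴ * A⁻¹ * B).PosDef := by
  have hdet : (fromBlocks A B Bᴴ D).det = A.det * (D - Bᴴ * A⁻¹ * B).det := by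
    rw [det_fromBlocks₁₁, invOf_eq_nonsing_inv]
  have hpsd := PosDef.fromBlocks₁₁ B D hA
  constructor
  · intro h
    rw [(hpsd.1 h.posSemidef).posDef_iff_det_ne_zero]
    exact right_ne_zero_of_mul (hdet ▸ h.det_pos.ne')
  · intro h
    rw [(hpsd.2 h.posSemidef).posDef_iff_det_ne_zero, hdet]
    exact mul_ne_zero hA.det_pos.ne' h.det_pos.ne'

variable [Fintype S] [DecidableEq S]

theorem exists_posDef_of_overlap {A : Matrix X X 𝕜} {B : Matrix (S ⊕ Q) (S ⊕ Q) 𝕜}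
    (hA : A.PosDef) (hB : B.PosDef) (f : S → X) (hAB : A.submatrix f f = B.toBlocks₁₁) :
    ∃ N : Matrix (X ⊕ Q) (X ⊕ Q) 𝕜, N.PosDef ∧ N.toBlocks₁₁ = A ∧
      N.submatrix (Sum.map f id) (Sum.map f id) = B := by
  set B₁₁ := B.toBlocks₁₁
  set B₁₂ := B.toBlocks₁₂
  set E := (1 : Matrix X X 𝕜).submatrix id f
  have hB₁₁ : B₁₁.PosDef := hB.submatrix Sum.inl_injective
  have := hA.isUnit.invertible
  have := hB₁₁.isUnit.invertible
  set C := A * E * B₁₁⁻¹ * B₁₂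
  have hEAE : Eᴴ * A * E = B₁₁ := by rw [← submatrix_eq_conjTranspose_mul_mul, hAB]
  have hC : C.submatrix f id = B₁₂ := by
    rw [← conjTranspose_one_submatrix_mul]
    change Eᴴ * (A * E * B₁₁⁻¹ * B₁₂) = B₁₂
    simp only [← Matrix.mul_assoc, hEAE, mul_inv_of_invertible, Matrix.one_mul]
  have hschur : Cᴴ * A⁻¹ * C = B₁₂ᴴ * B₁₁⁻¹ * B₁₂ := by
    calc Cᴴ * A⁻¹ * C = B₁₂ᴴ * B₁₁⁻¹ * (Eᴴ * A * E) * B₁₁⁻¹ * B₁₂ := by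
          simp only [C, conjTranspose_mul, hA.1.eq, (hB₁₁.1.inv).eq, Matrix.mul_assoc,
            inv_mul_cancel_left_of_invertible]
      _ = B₁₂ᴴ * B₁₁⁻¹ * B₁₂ := by
          rw [hEAE, Matrix.mul_assoc _ B₁₁, mul_inv_of_invertible, Matrix.mul_one]
  refine ⟨fromBlocks A C Cᴴ B.toBlocks₂₂, ?_, toBlocks_fromBlocks₁₁ .., ?_⟩
  · rw [posDef_fromBlocks₁₁_iff C _ hA, hschur, ← posDef_fromBlocks₁₁_iff B₁₂ _ hB₁₁,
      hB.1.fromBlocks_toBlocks]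
    exact hB
  · conv_rhs => rw [← hB.1.fromBlocks_toBlocks]
    ext (i | i) (j | j)
    · exact congrFun₂ hAB i j
    · exact congrFun₂ hC i j
    · exact congrArg star (congrFun₂ hC j i)
    · rfl

end Glue

open Set in
theorem exists_posDef_of_union {𝕜 V : Type*} [RCLike 𝕜] [Fintype V] {A B : Set V}
    (hAB : A ∪ B = univ) {MA : Matrix A A 𝕜} {MB : Matrix B B 𝕜} (hA : MA.PosDef)
    (hB : MB.PosDef)
    (hagree : MA.submatrix (inclusion inter_subset_left) (inclusion inter_subset_left) =
      MB.submatrix (inclusion inter_subset_right) (inclusion inter_subset_right)) :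
    ∃ N : Matrix V V 𝕜, N.PosDef ∧ N.submatrix (↑) (↑) = MA ∧ N.submatrix (↑) (↑) = MB := by
  classical
  have hAcB : Aᶜ ⊆ B := compl_subset_iff_union.mpr hAB
  set f : ↥(A ∩ B) → A := inclusion inter_subset_left
  set g : ↥(A ∩ B) ⊕ ↥Aᶜ → B := Sum.elim (inclusion inter_subset_right) (inclusion hAcB)
  have hg : g.Injective := (inclusion_injective _).sumElim (inclusion_injective _)
    fun s q h => q.2 (congrArg Subtype.val h ▸ s.2.1)
  obtain ⟨N, hN, hNA, hNB⟩ := exists_posDef_of_overlap hA (hB.submatrix hg) f hagree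
  have hsplit : ∀ x : B, ∃ z, (Equiv.Set.sumCompl A).symm x = Sum.map f id z ∧ g z = x := by
    rintro ⟨x, hxB⟩
    by_cases hxA : x ∈ A
    · exact ⟨.inl ⟨x, hxA, hxB⟩, by simp [Equiv.Set.sumCompl_symm_apply_of_mem hxA, f], rfl⟩
    · exact ⟨.inr ⟨x, hxA⟩, by simp [Equiv.Set.sumCompl_symm_apply_of_notMem hxA], rfl⟩
  refine ⟨N.submatrix (Equiv.Set.sumCompl A).symm (Equiv.Set.sumCompl A).symm,
    hN.submatrix (Equiv.injective _), ?_, ?_⟩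
  · rw [← hNA]
    ext x y
    simp [toBlocks₁₁]
  · ext x y
    obtain ⟨z, hzx, rfl⟩ := hsplit x
    obtain ⟨w, hwy, rfl⟩ := hsplit y
    simpa [hzx, hwy] using congrFun₂ hNB z w

end Matrix

namespace SimpleGraph

variable {V : Type*} {G : SimpleGraph V}

theorem Reachable.mem_of_forall_adj {R : Set V} (hR : ∀ ⦃x y⦄, x ∈ R → G.Adj x y → y ∈ R)
    {u v : V} (h : G.Reachable u v) (hu : u ∈ R) : v ∈ R := by
  obtain ⟨w⟩ := h
  induction w with
  | nil => exact hu
  | cons hadj _ ih => exact ih (hR hu hadj)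

@[simp]
theorem spanningCoe_induce_adj {U : Set V} {x y : V} :
    (G.induce U).spanningCoe.Adj x y ↔ G.Adj x y ∧ x ∈ U ∧ y ∈ U := by
  simp

theorem Reachable.mem_of_spanningCoe_induce {U : Set V} {u v : V}
    (h : (G.induce U).spanningCoe.Reachable u v) (hu : u ∈ U) : v ∈ U :=
  h.mem_of_forall_adj (fun _ _ _ hxy => (spanningCoe_induce_adj.1 hxy).2.2) hu

theorem Walk.reachable_spanningCoe_induce {U : Set V} {u v : V} (w : G.Walk u v)
    (hw : ∀ x ∈ w.support, x ∈ U) : (G.induce U).spanningCoe.Reachable u v :=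
  (w.induce U hw).reachable.map (Embedding.map (Function.Embedding.subtype _) _).toHom

theorem spanningCoe_induce_mono {G' : SimpleGraph V} {U U' : Set V} (hG : G ≤ G') (hU : U ⊆ U') :
    (G.induce U).spanningCoe ≤ (G'.induce U').spanningCoe := fun _ _ h => by
  rw [spanningCoe_induce_adj] at h ⊢
  exact ⟨hG h.1, hU h.2.1, hU h.2.2⟩

theorem reachable_spanningCoe_induce_setOf_reachable {a x y : V} (hx : G.Reachable a x)
    (hy : G.Reachable a y) : (G.induce {z | G.Reachable a z}).spanningCoe.Reachable x y := by
  classical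
  obtain ⟨w⟩ := hx.symm.trans hy
  exact w.reachable_spanningCoe_induce fun z hz =>
    hx.trans (w.takeUntil z hz).reachable

theorem Walk.dist_getVert_getVert {u v : V} (w : G.Walk u v) (hw : w.length = G.dist u v)
    {i j : ℕ} (hij : i ≤ j) (hj : j ≤ w.length) :
    G.dist (w.getVert i) (w.getVert j) = j - i := by
  have hsub := length_eq_dist_of_subwalk hw ((isSubwalk_take (w.drop i) (j - i)).trans
    (isSubwalk_drop w i))
  rw [take_length, drop_length, drop_getVert, Nat.add_sub_cancel' hij] at hsub
  rw [← hsub]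
  omega

def IsInducedPath (G : SimpleGraph V) (p : ℕ → V) (k : ℕ) : Prop :=
  ∀ ⦃i j⦄, i < j → j ≤ k → p i ≠ p j ∧ (G.Adj (p i) (p j) ↔ j = i + 1)

def IsInducedCycle (G : SimpleGraph V) (c : ℕ → V) (n : ℕ) : Prop :=
  ∀ ⦃i j⦄, i < j → j < n → c i ≠ c j ∧ (G.Adj (c i) (c j) ↔ j = i + 1 ∨ i = 0 ∧ j + 1 = n)

theorem Walk.isInducedPath_getVert {u v : V} (w : G.Walk u v) (hw : w.length = G.dist u v) :
    G.IsInducedPath w.getVert w.length := by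
  intro i j hij hj
  have hdist := w.dist_getVert_getVert hw hij.le hj
  refine ⟨fun h => ?_, ⟨fun hadj => ?_, ?_⟩⟩
  · rw [h, dist_self] at hdist
    omega
  · rw [dist_eq_one_iff_adj.mpr hadj] at hdist
    omega
  · rintro rfl
    exact w.adj_getVert_succ (by omega)

theorem IsInducedPath.of_spanningCoe_induce {U : Set V} {p : ℕ → V} {k : ℕ}
    (hp : (G.induce U).spanningCoe.IsInducedPath p k) (hU : ∀ i ≤ k, p i ∈ U) :
    G.IsInducedPath p k := by
  intro i j hij hj
  obtain ⟨hne, hadj⟩ := hp hij hj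
  refine ⟨hne, Iff.trans ?_ hadj⟩
  simp [hU i (by omega), hU j hj]

theorem exists_isInducedPath_through {C : Set V} {s t : V} (hst : s ≠ t) (hadj : ¬ G.Adj s t)
    (hs : ∃ x ∈ C, G.Adj s x) (ht : ∃ y ∈ C, G.Adj t y)
    (hC : ∀ x ∈ C, ∀ y ∈ C, (G.induce C).spanningCoe.Reachable x y) :
    ∃ p k, 2 ≤ k ∧ p 0 = s ∧ p k = t ∧ G.IsInducedPath p k ∧ ∀ i, 0 < i → i < k → p i ∈ C := by
  set U : Set V := insert s (insert t C)
  set K := (G.induce U).spanningCoe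
  obtain ⟨x, hxC, hsx⟩ := hs
  obtain ⟨y, hyC, hty⟩ := ht
  have hCU : C ⊆ U := fun z hz => .inr (.inr hz)
  have hK : K.Reachable s t := by
    have hxy : K.Reachable x y := (hC x hxC y hyC).mono (spanningCoe_induce_mono le_rfl hCU)
    refine (Adj.reachable ?_).trans (hxy.trans (Adj.reachable ?_)) <;> simp_all [K, U, adj_comm]
  obtain ⟨w, hw⟩ := hK.exists_walk_length_eq_dist
  have hwU : ∀ i, w.getVert i ∈ U := fun i =>
    (w.take i).reachable.mem_of_spanningCoe_induce (.inl rfl)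
  have hp := (w.isInducedPath_getVert hw).of_spanningCoe_induce fun i _ => hwU i
  have h2 : 2 ≤ w.length := by
    by_contra! h
    interval_cases hlen : w.length
    · exact hst (w.eq_of_length_eq_zero hlen)
    · have ht := w.getVert_length
      rw [hlen] at ht
      exact hadj (by simpa [ht] using (hp zero_lt_one le_rfl).2.mpr rfl)
  refine ⟨w.getVert, w.length, h2, w.getVert_zero, w.getVert_length, hp, fun i hi hik => ?_⟩
  have hs' := (hp hi hik.le).1
  have ht' := (hp hik le_rfl).1
  rw [w.getVert_zero] at hs'
  rw [w.getVert_length] at ht'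
  simpa [U, Ne.symm hs', ht'] using hwU i

theorem IsInducedPath.isInducedCycle_append {p q : ℕ → V} {k l : ℕ} (hp : G.IsInducedPath p k)
    (hq : G.IsInducedPath q l) (hk : 2 ≤ k) (hl : 2 ≤ l) (h0 : p 0 = q 0) (hkl : p k = q l)
    (hpq : ∀ i j, 0 < i → i < k → 0 < j → j < l → p i ≠ q j ∧ ¬ G.Adj (p i) (q j)) :
    G.IsInducedCycle (fun i => if i ≤ k then p i else q (k + l - i)) (k + l) := by
  intro i j hij hj
  dsimp only
  have hq' : ∀ m, k ≤ m → (if m ≤ k then p m else q (k + l - m)) = q (k + l - m) := by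
    intro m hm
    split_ifs with h
    · rw [show m = k by omega, hkl, show k + l - k = l by omega]
    · rfl
  rcases le_or_gt j k with hjk | hkj
  · simp only [if_pos hjk, if_pos (hij.le.trans hjk)]
    refine ⟨(hp hij hjk).1, (hp hij hjk).2.trans ?_⟩
    omega
  rw [if_neg (by omega : ¬ j ≤ k)]
  rcases le_or_gt k i with hki | hik
  · rw [hq' i hki]
    obtain ⟨hne, hadj⟩ := hq (by omega : k + l - j < k + l - i) (by omega)
    refine ⟨hne.symm, G.adj_comm _ _ |>.trans (hadj.trans ?_)⟩
    omega
  rw [if_pos hik.le]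
  rcases Nat.eq_zero_or_pos i with rfl | hi
  · obtain ⟨hne, hadj⟩ := hq (by omega : 0 < k + l - j) (by omega)
    rw [h0]
    refine ⟨hne, hadj.trans ?_⟩
    omega
  · obtain ⟨hne, hadj⟩ := hpq i (k + l - j) hi hik (by omega) (by omega)
    exact ⟨hne, iff_of_false hadj (by omega)⟩

theorem IsChordal.not_isInducedCycle (hG : G.IsChordal) {c : ℕ → V} {n : ℕ} (hn : 4 ≤ n) :
    ¬ G.IsInducedCycle c n := by
  intro hc
  have hmod : ∀ {i j : ℕ}, i < j → j < n →
      ((i + 1) % n = j ∨ (j + 1) % n = i ↔ j = i + 1 ∨ i = 0 ∧ j + 1 = n) := by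
    intro i j hij hj
    rw [Nat.mod_eq_of_lt (by omega : i + 1 < n)]
    rcases (show j + 1 ≤ n by omega).lt_or_eq with hj' | hj'
    · rw [Nat.mod_eq_of_lt hj']
      omega
    · rw [hj', Nat.mod_self]
      omega
  refine hG ⟨n, fun i => c i, hn, fun i j hij => ?_, fun i j => ?_⟩
  · by_contra hne
    rcases lt_or_gt_of_ne (Fin.val_ne_of_ne hne) with h | h
    · exact (hc h j.2).1 hij
    · exact (hc h i.2).1 hij.symm
  rcases lt_trichotomy (i : ℕ) j with h | h | h
  · rw [(hc h j.2).2, hmod h j.2]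
  · rw [Fin.ext h]
    refine iff_of_false (G.irrefl) ?_
    rcases (show (j : ℕ) + 1 ≤ n by omega).lt_or_eq with hj' | hj'
    · rw [Nat.mod_eq_of_lt hj']
      omega
    · rw [hj', Nat.mod_self]
      omega
  · rw [G.adj_comm, (hc h i.2).2, ← hmod h i.2, or_comm]

def Separates (G : SimpleGraph V) (S : Set V) (a b : V) : Prop :=
  a ∉ S ∧ b ∉ S ∧ ¬ (G.induce Sᶜ).spanningCoe.Reachable a b

theorem separates_comm {S : Set V} {a b : V} : G.Separates S a b ↔ G.Separates S b a := by
  simp only [Separates, reachable_comm (u := a)]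
  tauto

theorem separates_compl_pair {a b : V} (hab : a ≠ b) (h : ¬ G.Adj a b) :
    G.Separates {a, b}ᶜ a b := by
  refine ⟨by simp, by simp, fun hr => hab ?_⟩
  refine (hr.mem_of_forall_adj (R := {a}) (fun x y hx hxy => ?_) rfl).symm
  rw [Set.mem_singleton_iff] at hx
  subst hx
  rw [spanningCoe_induce_adj, compl_compl] at hxy
  rcases hxy.2.2 with rfl | rfl
  · rfl
  · exact absurd hxy.1 h

theorem exists_adj_of_minimal_separates {S : Set V} {a b s : V}
    (hS : Minimal (G.Separates · a b) S) (hs : s ∈ S) :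
    ∃ x, (G.induce Sᶜ).spanningCoe.Reachable a x ∧ G.Adj s x := by
  by_contra! h
  refine hS.not_prop_of_lt (Set.sdiff_singleton_ssubset.2 hs)
    ⟨fun ha => hS.1.1 ha.1, fun hb => hS.1.2.1 hb.1, fun hab => hS.1.2.2 ?_⟩
  refine hab.mem_of_forall_adj (R := {x | (G.induce Sᶜ).spanningCoe.Reachable a x})
    (fun x y hx hxy => ?_) (Reachable.refl a)
  have hxS : x ∉ S := hx.mem_of_spanningCoe_induce hS.1.1
  rw [spanningCoe_induce_adj] at hxy
  have hys : y ≠ s := fun hys => h x hx (hys ▸ hxy.1.symm)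
  have hyS : y ∉ S := fun hyS => hxy.2.2 ⟨hyS, hys⟩
  exact hx.trans (spanningCoe_induce_adj.2 ⟨hxy.1, hxS, hyS⟩).reachable

theorem exists_isInducedPath_of_minimal_separates {S : Set V} {a b s t : V}
    (hS : Minimal (G.Separates · a b) S) (hs : s ∈ S) (ht : t ∈ S) (hst : s ≠ t)
    (hadj : ¬ G.Adj s t) :
    ∃ p k, 2 ≤ k ∧ p 0 = s ∧ p k = t ∧ G.IsInducedPath p k ∧
      ∀ i, 0 < i → i < k → (G.induce Sᶜ).spanningCoe.Reachable a (p i) :=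
  exists_isInducedPath_through hst hadj (exists_adj_of_minimal_separates hS hs)
    (exists_adj_of_minimal_separates hS ht) fun _ hx _ hy =>
      (reachable_spanningCoe_induce_setOf_reachable hx hy).mono
        (spanningCoe_induce_mono (spanningCoe_induce_le G _) le_rfl)

theorem IsChordal.isClique_of_minimal_separates (hG : G.IsChordal) {S : Set V} {a b : V}
    (hS : Minimal (G.Separates · a b) S) : G.IsClique S := by
  intro s hs t ht hst
  by_contra hadj
  have hS' : Minimal (G.Separates · b a) S := by simpa only [separates_comm] using hS
  obtain ⟨p, k, hk, hp0, hpk, hp, hpa⟩ :=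
    exists_isInducedPath_of_minimal_separates hS hs ht hst hadj
  obtain ⟨q, l, hl, hq0, hql, hq, hqb⟩ :=
    exists_isInducedPath_of_minimal_separates hS' hs ht hst hadj
  refine hG.not_isInducedCycle (by omega) (hp.isInducedCycle_append hq hk hl
    (hp0.trans hq0.symm) (hpk.trans hql.symm) fun i j hi hik hj hjl => ?_)
  have hx := hpa i hi hik
  have hy := hqb j hj hjl
  refine ⟨fun hxy => hS.1.2.2 (hx.trans (hxy ▸ hy.symm)), fun hxy => hS.1.2.2 ?_⟩
  have hxS := hx.mem_of_spanningCoe_induce hS.1.1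
  have hyS := hy.mem_of_spanningCoe_induce hS.1.2.1
  exact hx.trans ((spanningCoe_induce_adj.2 ⟨hxy, hxS, hyS⟩).reachable.trans hy.symm)

theorem IsChordal.exists_clique_separation [Finite V] (hG : G.IsChordal) {a b : V} (hab : a ≠ b)
    (h : ¬ G.Adj a b) :
    ∃ A B : Set V, A ∪ B = Set.univ ∧ b ∉ A ∧ a ∉ B ∧ G.IsClique (A ∩ B) ∧
      ∀ x y, G.Adj x y → x ∈ A ∧ y ∈ A ∨ x ∈ B ∧ y ∈ B := by
  obtain ⟨S, -, hS⟩ := exists_minimal_le_of_wellFoundedLT (G.Separates · a b) _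
    (separates_compl_pair hab h)
  set C := {x | (G.induce Sᶜ).spanningCoe.Reachable a x}
  have hCS : ∀ x y, x ∈ C → G.Adj x y → y ∈ C ∪ S := by
    intro x y hx hxy
    by_cases hyS : y ∈ S
    · exact .inr hyS
    have hxS := hx.mem_of_spanningCoe_induce hS.1.1
    exact .inl (hx.trans (spanningCoe_induce_adj.2 ⟨hxy, hxS, hyS⟩).reachable)
  refine ⟨C ∪ S, Cᶜ, by rw [Set.union_right_comm, Set.union_compl_self, Set.univ_union],
    fun hb => hb.elim hS.1.2.2 hS.1.2.1, fun ha => ha (Reachable.refl a),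
    (hG.isClique_of_minimal_separates hS).subset fun x hx => hx.1.resolve_left hx.2,
    fun x y hxy => ?_⟩
  · by_cases hx : x ∈ C
    · exact .inl ⟨.inl hx, hCS x y hx hxy⟩
    by_cases hy : y ∈ C
    · exact .inl ⟨hCS y x hy hxy.symm, .inl hy⟩
    exact .inr ⟨hx, hy⟩

theorem IsChordal.induce (hG : G.IsChordal) (U : Set V) : (G.induce U).IsChordal :=
  fun ⟨n, v, hn, hv, hadj⟩ => hG ⟨n, Subtype.val ∘ v, hn, Subtype.val_injective.comp hv, hadj⟩

variable {𝕜 : Type*} [RCLike 𝕜]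

theorem posDef_submatrix_of_isClique_induce {M : Matrix V V 𝕜}
    (hM : ∀ C : Finset V, G.IsClique (C : Set V) →
      (M.submatrix (Subtype.val : C → V) Subtype.val).PosDef)
    (U : Set V) (C : Finset U) (hC : (G.induce U).IsClique (C : Set U)) :
    ((M.submatrix (Subtype.val : U → V) Subtype.val).submatrix (Subtype.val : C → U)
      Subtype.val).PosDef := by
  classical
  have hD : G.IsClique (C.map (Function.Embedding.subtype _) : Set V) := by
    rw [Finset.coe_map]
    exact isClique_induce_iff.1 hC
  refine (hM _ hD).submatrix (e := fun c : C => ⟨c.1.1, Finset.mem_map_of_mem _ c.2⟩) ?_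
  rintro ⟨⟨c, _⟩, _⟩ ⟨⟨c', _⟩, _⟩ h
  obtain rfl : c = c' := congrArg Subtype.val h
  rfl

theorem IsChordal.exists_posDef_completion [Fintype V] (hG : G.IsChordal) {M : Matrix V V 𝕜}
    (hM : ∀ C : Finset V, G.IsClique (C : Set V) →
      (M.submatrix (Subtype.val : C → V) Subtype.val).PosDef) :
    ∃ N : Matrix V V 𝕜, N.PosDef ∧ (∀ i, N i i = M i i) ∧ ∀ i j, G.Adj i j → N i j = M i j := by
  induction h : Fintype.card V using Nat.strong_induction_on generalizing V with
  | _ n ih =>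
  by_cases hcomplete : ∀ a b, a ≠ b → G.Adj a b
  · have hM' := (hM Finset.univ fun a _ b _ => hcomplete a b).submatrix
      (e := fun v => ⟨v, Finset.mem_univ v⟩) fun v w h => congrArg Subtype.val h
    exact ⟨M, hM', fun _ => rfl, fun _ _ _ => rfl⟩
  obtain ⟨a, b, hab, hnadj⟩ : ∃ a b, a ≠ b ∧ ¬ G.Adj a b := by simpa using hcomplete
  obtain ⟨A, B, hAB, hbA, haB, hclique, hedge⟩ := hG.exists_clique_separation hab hnadj
  classical
  have hsub : ∀ U : Set V, ∀ v ∉ U, ∃ NU : Matrix U U 𝕜, NU.PosDef ∧ (∀ i, NU i i = M i i) ∧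
      ∀ i j : U, G.Adj i j → NU i j = M i j := fun U v hv =>
    ih _ (h ▸ Fintype.card_subtype_lt hv) (hG.induce U)
      (posDef_submatrix_of_isClique_induce hM U) rfl
  obtain ⟨NA, hNA, hNAd, hNAe⟩ := hsub A b hbA
  obtain ⟨NB, hNB, hNBd, hNBe⟩ := hsub B a haB
  obtain ⟨N, hN, hNA', hNB'⟩ := Matrix.exists_posDef_of_union hAB hNA hNB (by
    ext ⟨x, hxA, hxB⟩ ⟨y, hyA, hyB⟩
    rcases eq_or_ne x y with rfl | hxy
    · exact (hNAd ⟨x, hxA⟩).trans (hNBd ⟨x, hxB⟩).symm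
    · have hxy := hclique ⟨hxA, hxB⟩ ⟨hyA, hyB⟩ hxy
      exact (hNAe ⟨x, hxA⟩ ⟨y, hyA⟩ hxy).trans (hNBe ⟨x, hxB⟩ ⟨y, hyB⟩ hxy).symm)
  refine ⟨N, hN, fun i => ?_, fun i j hij => ?_⟩
  · rcases (hAB ▸ Set.mem_univ i : i ∈ A ∪ B) with hi | hi
    · exact (congrFun₂ hNA' ⟨i, hi⟩ ⟨i, hi⟩).trans (hNAd _)
    · exact (congrFun₂ hNB' ⟨i, hi⟩ ⟨i, hi⟩).trans (hNBd _)
  · rcases hedge i j hij with ⟨hi, hj⟩ | ⟨hi, hj⟩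
    · exact (congrFun₂ hNA' ⟨i, hi⟩ ⟨j, hj⟩).trans (hNAe ⟨i, hi⟩ ⟨j, hj⟩ hij)
    · exact (congrFun₂ hNB' ⟨i, hi⟩ ⟨j, hj⟩).trans (hNBe ⟨i, hi⟩ ⟨j, hj⟩ hij)

end SimpleGraph

theorem chordal_pd_completion_general {m : ℕ} (G : SimpleGraph (Fin m))
    (hchordal : G.IsChordal)
    (M : Matrix (Fin m) (Fin m) ℝ)
    (hcliques : ∀ C : Finset (Fin m), G.IsClique (C : Set (Fin m)) →
      (M.submatrix (fun i : C => (i : Fin m)) (fun i : C => (i : Fin m))).PosDef) :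
    ∃ Sigma : Matrix (Fin m) (Fin m) ℝ, Sigma.PosDef ∧
      (∀ i : Fin m, Sigma i i = M i i) ∧
      (∀ i j : Fin m, G.Adj i j → Sigma i j = M i j) :=
  hchordal.exists_posDef_completion hcliques

theorem chordal_pd_completion {m : ℕ} (G : SimpleGraph (Fin m))
    (hchordal : G.IsChordal)
    (M : Matrix (Fin m) (Fin m) ℝ) (hM : M.IsSymm)
    (hcliques : ∀ C : Finset (Fin m), G.IsClique (C : Set (Fin m)) →
      (M.submatrix (fun i : C => (i : Fin m)) (fun i : C => (i : Fin m))).PosDef) :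
    ∃ Sigma : Matrix (Fin m) (Fin m) ℝ, Sigma.PosDef ∧
      (∀ i : Fin m, Sigma i i = M i i) ∧
      (∀ i j : Fin m, G.Adj i j → Sigma i j = M i j) :=
  chordal_pd_completion_general G hchordal M hcliques
end

section
/- Let α, β, γ ∈ (0, π). The 3×3 real symmetric matrix with unit diagonal and off-diagonal entries cos(α), cos(β), cos(γ), namely [[1, cos α, cos β], [cos α, 1, cos γ], [cos β, cos γ, 1]], is positive definite if and only if α < β + γ, β < α + γ, γ < α + β, and α + β + γ < 2π. -/
/-!
With `|a| < 1`, the unit-diagonal matrix `[[1, a, b], [a, 1, c], [b, c, 1]]` is positive definite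
exactly when its determinant `1 + 2abc - a² - b² - c²` is positive (its `LDLᵀ` pivots are `1`,
`1 - a²` and `det / (1 - a²)`). For `a, b, c = cos α, cos β, cos γ` the determinant factors as
`(cos α - cos (β + γ)) * (cos (β - γ) - cos α)`, and the two factors sum to `2 sin β sin γ > 0`,
so the determinant is positive iff both factors are. Monotonicity of `cos` on `[0, π]` turns these
into `α < β + γ < 2π - α` and `|β - γ| < α`.
-/

open Real Set

lemma mul_pos_iff_of_add_pos {R : Type*} [Ring R] [LinearOrder R] [IsStrictOrderedRing R]
    {a b : R} (hab : 0 < a + b) : 0 < a * b ↔ 0 < a ∧ 0 < b := by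
  refine ⟨fun h => ?_, fun h => mul_pos h.1 h.2⟩
  rcases mul_pos_iff.mp h with h | ⟨ha, hb⟩
  · exact h
  · exact absurd hab (add_neg ha hb).not_gt

namespace Matrix

lemma det_unitDiag_fin_three (a b c : ℝ) :
    (!![1, a, b; a, 1, c; b, c, 1] : Matrix (Fin 3) (Fin 3) ℝ).det =
      1 + 2 * a * b * c - a ^ 2 - b ^ 2 - c ^ 2 := by
  simp only [det_fin_three, Fin.isValue, of_apply, cons_val', cons_val_zero, cons_val_fin_one,
    cons_val_one, mul_one, cons_val, one_mul]
  ring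

lemma dotProduct_mulVec_unitDiag_fin_three (a b c : ℝ) (x : Fin 3 → ℝ) :
    x ⬝ᵥ (!![1, a, b; a, 1, c; b, c, 1] *ᵥ x) =
      x 0 ^ 2 + x 1 ^ 2 + x 2 ^ 2 + 2 * a * x 0 * x 1 + 2 * b * x 0 * x 2 + 2 * c * x 1 * x 2 := by
  simp only [dotProduct, mulVec, of_apply, cons_val', cons_val_fin_one, Fin.sum_univ_three,
    Fin.isValue, cons_val_zero, cons_val_one, cons_val, one_mul]
  ring

lemma eq_zero_of_unitDiag_quadratic_nonpos {a b c p q r : ℝ} (ha : a ^ 2 < 1)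
    (hdet : 0 < 1 + 2 * a * b * c - a ^ 2 - b ^ 2 - c ^ 2)
    (hQ : p ^ 2 + q ^ 2 + r ^ 2 + 2 * a * p * q + 2 * b * p * r + 2 * c * q * r ≤ 0) :
    p = 0 ∧ q = 0 ∧ r = 0 := by
  have hLDL : (1 - a ^ 2) *
      (p ^ 2 + q ^ 2 + r ^ 2 + 2 * a * p * q + 2 * b * p * r + 2 * c * q * r) =
      (1 - a ^ 2) * (p + a * q + b * r) ^ 2 + ((1 - a ^ 2) * q + (c - a * b) * r) ^ 2 +
        (1 + 2 * a * b * c - a ^ 2 - b ^ 2 - c ^ 2) * r ^ 2 := by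
    ring
  set e := 1 - a ^ 2
  set D := 1 + 2 * a * b * c - a ^ 2 - b ^ 2 - c ^ 2
  have he : 0 < e := by linarith
  have hsum := mul_nonpos_of_nonneg_of_nonpos he.le hQ
  have hu := mul_nonneg he.le (sq_nonneg (p + a * q + b * r))
  have hv := sq_nonneg (e * q + (c - a * b) * r)
  have hr := mul_nonneg hdet.le (sq_nonneg r)
  have hr0 : D * r ^ 2 = 0 := by linarith
  have hv0 : (e * q + (c - a * b) * r) ^ 2 = 0 := by linarith
  have hu0 : e * (p + a * q + b * r) ^ 2 = 0 := by linarith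
  obtain rfl : r = 0 := by simpa [hdet.ne'] using hr0
  obtain rfl : q = 0 := by simpa [he.ne'] using hv0
  obtain rfl : p = 0 := by simpa [he.ne'] using hu0
  exact ⟨rfl, rfl, rfl⟩

theorem posDef_unitDiag_fin_three_iff {a b c : ℝ} (ha : a ^ 2 < 1) :
    (!![1, a, b; a, 1, c; b, c, 1] : Matrix (Fin 3) (Fin 3) ℝ).PosDef ↔
      0 < 1 + 2 * a * b * c - a ^ 2 - b ^ 2 - c ^ 2 := by
  rw [← det_unitDiag_fin_three]
  refine ⟨PosDef.det_pos, fun hdet => PosDef.of_dotProduct_mulVec_pos ?_ fun x hx => ?_⟩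
  · ext i j
    fin_cases i <;> fin_cases j <;> rfl
  rw [det_unitDiag_fin_three] at hdet
  rw [star_trivial, dotProduct_mulVec_unitDiag_fin_three]
  contrapose! hx
  obtain ⟨h0, h1, h2⟩ := eq_zero_of_unitDiag_quadratic_nonpos ha hdet hx
  ext i
  fin_cases i <;> assumption

end Matrix

lemma one_add_two_mul_cos_mul_cos_mul_cos_sub_sq_eq (α β γ : ℝ) :
    1 + 2 * cos α * cos β * cos γ - cos α ^ 2 - cos β ^ 2 - cos γ ^ 2 =
      (cos α - cos (β + γ)) * (cos (β - γ) - cos α) := by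
  rw [cos_add, cos_sub]
  linear_combination (-sin γ ^ 2) * sin_sq_add_cos_sq β - (1 - cos β ^ 2) * sin_sq_add_cos_sq γ

lemma cos_add_lt_cos_sub {β γ : ℝ} (hβ : 0 < sin β) (hγ : 0 < sin γ) :
    cos (β + γ) < cos (β - γ) := by
  rw [cos_add, cos_sub]
  linarith [mul_pos hβ hγ]

lemma cos_lt_cos_iff_lt_and_add_lt_two_pi {α s : ℝ} (hα : α ∈ Icc 0 π) (hs : s ∈ Icc 0 (2 * π)) :
    cos s < cos α ↔ α < s ∧ α + s < 2 * π := by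
  obtain ⟨hα0, hαπ⟩ := hα
  obtain ⟨hs0, hs2π⟩ := hs
  rcases le_or_gt s π with hsπ | hsπ
  · rw [strictAntiOn_cos.lt_iff_gt ⟨hs0, hsπ⟩ ⟨hα0, hαπ⟩]
    exact ⟨fun h => ⟨h, by linarith⟩, And.left⟩
  · rw [← cos_two_pi_sub s,
      strictAntiOn_cos.lt_iff_gt ⟨by linarith, by linarith⟩ ⟨hα0, hαπ⟩]
    exact ⟨fun h => ⟨by linarith, by linarith⟩, fun h => by linarith [h.2]⟩

lemma cos_lt_cos_iff_abs_lt {α d : ℝ} (hα : α ∈ Icc 0 π) (hd : |d| ≤ π) :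
    cos α < cos d ↔ |d| < α := by
  rw [← cos_abs d]
  exact strictAntiOn_cos.lt_iff_gt hα ⟨abs_nonneg d, hd⟩

theorem cos_matrix_posDef_iff (α β γ : ℝ)
    (hα : α ∈ Set.Ioo 0 π) (hβ : β ∈ Set.Ioo 0 π) (hγ : γ ∈ Set.Ioo 0 π) :
    (!![1, cos α, cos β;
        cos α, 1, cos γ;
        cos β, cos γ, 1] : Matrix (Fin 3) (Fin 3) ℝ).PosDef ↔
      (α < β + γ ∧ β < α + γ ∧ γ < α + β ∧ α + β + γ < 2 * π) := by
  obtain ⟨hα0, hαπ⟩ := hα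
  obtain ⟨hβ0, hβπ⟩ := hβ
  obtain ⟨hγ0, hγπ⟩ := hγ
  have hcos_sq : cos α ^ 2 < 1 := by
    rw [cos_sq']
    exact sub_lt_self _ (pow_pos (sin_pos_of_pos_of_lt_pi hα0 hαπ) 2)
  have hsum : 0 < (cos α - cos (β + γ)) + (cos (β - γ) - cos α) := by
    linarith [cos_add_lt_cos_sub (sin_pos_of_pos_of_lt_pi hβ0 hβπ)
      (sin_pos_of_pos_of_lt_pi hγ0 hγπ)]
  have hαIcc : α ∈ Icc 0 π := ⟨hα0.le, hαπ.le⟩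
  rw [Matrix.posDef_unitDiag_fin_three_iff hcos_sq, one_add_two_mul_cos_mul_cos_mul_cos_sub_sq_eq,
    mul_pos_iff_of_add_pos hsum, sub_pos, sub_pos,
    cos_lt_cos_iff_lt_and_add_lt_two_pi hαIcc ⟨by linarith, by linarith⟩,
    cos_lt_cos_iff_abs_lt hαIcc (abs_sub_le_iff.mpr ⟨by linarith, by linarith⟩), abs_sub_lt_iff]
  constructor
  · rintro ⟨⟨h₁, h₄⟩, h₂, h₃⟩
    exact ⟨h₁, by linarith, by linarith, by linarith⟩
  · rintro ⟨h₁, h₂, h₃, h₄⟩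
    exact ⟨⟨h₁, by linarith⟩, by linarith, by linarith⟩
end

section
/- Let m ≥ 1 and let K_{2,m} be the complete bipartite graph with parts {1,2} and {3,…,m+2}, so that its edges are exactly the pairs (a,i) with a ∈ {1,2} and i ∈ {3,…,m+2}. Let x₁,…,x_{m+2} ∈ ℝ² be pairwise linearly independent nonzero vectors and let S be the Gram matrix S_{kl} = ⟨x_k, x_l⟩. Write φ_k ∈ [0,π) for the angle of the line spanned by x_k. Then the K_{2,m}-partial matrix S_{K_{2,m}} has a positive definite completion if and only if either φ_i lies strictly between min(φ₁,φ₂) and max(φ₁,φ₂) for every i ∈ {3,…,m+2}, or φ_i lies strictly between min(φ₁,φ₂) and max(φ₁,φ₂) for no i ∈ {3,…,m+2}; equivalently, if and only if one of the two open arcs of the circle of lines determined by the lines spanned by x₁ and x₂ contains none of the lines spanned by x₃,…,x_{m+2} (i.e., the lines of x₁ and x₂ are direct neighbors). -/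
/-!
After rescaling the data vectors to unit length the specified entries are `cos (φ k - φ l)`, and
the only unspecified entry that matters is `r = Σ₀₁`. For `i ≥ 2` the principal minor of `Σ` on
`{0, 1, i}` is `(cos (φ₀ - φ₁) - r) (r - cos (φ₀ + φ₁ - 2 φᵢ))`, so it is positive exactly when `r`
lies strictly between `u = cos (φ₀ - φ₁)` and `Vᵢ = cos (φ₀ + φ₁ - 2 φᵢ)`. Since
`Vᵢ - u = 2 sin (φ₀ - φᵢ) sin (φᵢ - φ₁)`, the value `Vᵢ` lies above `u` exactly when the line `φᵢ`
separates the lines `φ₀` and `φ₁`. A separating `i` and a non-separating `j` would force `r` both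
above and below `u`. Conversely, if all `Vᵢ` lie on one side of `u`, any `r` close enough to `u` on
that side works: the completion is the Gram matrix of plane vectors reproducing rows `0` and `1`,
plus the diagonal of the (positive) Schur complements of the minors.
-/

open Real Matrix Set Filter Topology

lemma sign_sin_eq_sign {z : ℝ} (h : |z| < π) : SignType.sign (sin z) = SignType.sign z := by
  rcases lt_trichotomy z 0 with hz | rfl | hz
  · rw [sign_neg hz, sign_neg (sin_neg_of_neg_of_neg_pi_lt hz (neg_lt_of_abs_lt h))]
  · simp
  · rw [sign_pos hz, sign_pos (sin_pos_of_pos_of_lt_pi hz (lt_of_abs_lt h))]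

lemma cos_sq_lt_one_of_abs_lt_pi {z : ℝ} (h : |z| < π) (hz : z ≠ 0) : cos z ^ 2 < 1 := by
  have hsin : sin z ≠ 0 := by
    rw [← sign_ne_zero, sign_sin_eq_sign h, sign_ne_zero]
    exact hz
  have : 0 < sin z ^ 2 := by positivity
  rw [cos_sq']
  linarith

lemma abs_sub_lt_pi_of_mem_Ico {p q : ℝ} (hp : p ∈ Ico 0 π) (hq : q ∈ Ico 0 π) :
    |p - q| < π :=
  abs_sub_lt_iff.2 ⟨by linarith [hp.2, hq.1], by linarith [hp.1, hq.2]⟩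

lemma cos_add_sub_sub_cos_sub (p q t : ℝ) :
    cos (p + q - 2 * t) - cos (p - q) = 2 * sin (p - t) * sin (t - q) := by
  rw [cos_sub_cos, show (p + q - 2 * t + (p - q)) / 2 = p - t by ring,
    show (p + q - 2 * t - (p - q)) / 2 = -(t - q) by ring, sin_neg]
  ring

lemma sub_mul_sub_pos_iff_mem_uIoo {a b x : ℝ} : 0 < (a - x) * (x - b) ↔ x ∈ uIoo a b := by
  rcases le_total a b with h | h
  · rw [uIoo_of_le h, mem_Ioo, mul_pos_iff]
    constructor
    · rintro (⟨h1, h2⟩ | ⟨h1, h2⟩) <;> constructor <;> linarith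
    · rintro ⟨h1, h2⟩; right; constructor <;> linarith
  · rw [uIoo_of_ge h, mem_Ioo, mul_pos_iff]
    constructor
    · rintro (⟨h1, h2⟩ | ⟨h1, h2⟩) <;> constructor <;> linarith
    · rintro ⟨h1, h2⟩; left; constructor <;> linarith

section Separation

variable {p q t : ℝ} (hp : p ∈ Ico 0 π) (hq : q ∈ Ico 0 π) (ht : t ∈ Ico 0 π)
include hp hq ht

lemma sign_cos_add_sub_sub_cos_sub :
    SignType.sign (cos (p + q - 2 * t) - cos (p - q)) = SignType.sign ((p - t) * (t - q)) := by
  rw [cos_add_sub_sub_cos_sub, mul_assoc, sign_mul, sign_pos two_pos, one_mul, sign_mul, sign_mul,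
    sign_sin_eq_sign (abs_sub_lt_pi_of_mem_Ico hp ht),
    sign_sin_eq_sign (abs_sub_lt_pi_of_mem_Ico ht hq)]

lemma cos_sub_lt_cos_add_sub_iff : cos (p - q) < cos (p + q - 2 * t) ↔ t ∈ uIoo p q := by
  rw [← sub_pos, ← sign_eq_one_iff, sign_cos_add_sub_sub_cos_sub hp hq ht, sign_eq_one_iff,
    sub_mul_sub_pos_iff_mem_uIoo]

lemma cos_add_sub_lt_cos_sub_iff (hpt : p ≠ t) (hqt : q ≠ t) :
    cos (p + q - 2 * t) < cos (p - q) ↔ t ∉ uIoo p q := by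
  rw [← sub_neg, ← sign_eq_neg_one_iff, sign_cos_add_sub_sub_cos_sub hp hq ht,
    sign_eq_neg_one_iff, ← sub_mul_sub_pos_iff_mem_uIoo, not_lt,
    (mul_ne_zero (sub_ne_zero.2 hpt) (sub_ne_zero.2 hqt.symm)).le_iff_lt]

end Separation

section Eventually

variable {α ι : Type*} [LinearOrder α] [TopologicalSpace α] [OrderTopology α] {s : Set ι}
  {u : α} {V : ι → α}

lemma eventually_nhdsGT_forall_mem_uIoo (hs : s.Finite) (h : ∀ i ∈ s, u < V i) :
    ∀ᶠ r in 𝓝[>] u, ∀ i ∈ s, r ∈ uIoo u (V i) :=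
  hs.eventually_all.2 fun i hi => (eventually_mem_nhdsWithin.and
    (eventually_nhdsWithin_of_eventually_nhds (eventually_lt_nhds (h i hi)))).mono
    fun _ hr => mem_uIoo_of_lt hr.1 hr.2

lemma eventually_nhdsLT_forall_mem_uIoo (hs : s.Finite) (h : ∀ i ∈ s, V i < u) :
    ∀ᶠ r in 𝓝[<] u, ∀ i ∈ s, r ∈ uIoo u (V i) :=
  hs.eventually_all.2 fun i hi => (eventually_mem_nhdsWithin.and
    (eventually_nhdsWithin_of_eventually_nhds (eventually_gt_nhds (h i hi)))).mono
    fun _ hr => mem_uIoo_of_gt hr.2 hr.1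

end Eventually

lemma exists_sq_lt_one_forall_mem_uIoo {ι : Type*} {s : Set ι} (hs : s.Finite) {u : ℝ}
    (hu : u ^ 2 < 1) {V : ι → ℝ} (h : (∀ i ∈ s, u < V i) ∨ ∀ i ∈ s, V i < u) :
    ∃ r, r ^ 2 < 1 ∧ ∀ i ∈ s, r ∈ uIoo u (V i) := by
  have hr : ∀ᶠ r in 𝓝 u, r ^ 2 < 1 :=
    (continuous_pow 2).continuousAt.eventually_lt continuousAt_const hu
  rcases h with h | h
  · exact ((hr.filter_mono nhdsWithin_le_nhds).and
      (eventually_nhdsGT_forall_mem_uIoo hs h)).exists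
  · exact ((hr.filter_mono nhdsWithin_le_nhds).and
      (eventually_nhdsLT_forall_mem_uIoo hs h)).exists

lemma det_corr_three (r a b : ℝ) :
    !![1, r, a; r, 1, b; a, b, 1].det = (1 - r ^ 2) * (1 - a ^ 2) - (b - r * a) ^ 2 := by
  simp only [det_fin_three, of_apply, cons_val', cons_val_zero, cons_val_one, cons_val_fin_one,
    cons_val]
  ring

lemma det_corr_three_cos (r α β : ℝ) :
    !![1, r, cos α; r, 1, cos β; cos α, cos β, 1].det = (cos (α - β) - r) * (r - cos (α + β)) := by
  rw [det_corr_three, cos_sub, cos_add]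
  linear_combination (-(1 - cos β ^ 2)) * sin_sq_add_cos_sq α - sin α ^ 2 * sin_sq_add_cos_sq β

lemma det_corr_three_cos_sub_pos_iff (r p q t : ℝ) :
    0 < !![1, r, cos (p - t); r, 1, cos (q - t); cos (p - t), cos (q - t), 1].det ↔
      r ∈ uIoo (cos (p - q)) (cos (p + q - 2 * t)) := by
  rw [det_corr_three_cos, sub_mul_sub_pos_iff_mem_uIoo, show p - t - (q - t) = p - q by ring,
    show p - t + (q - t) = p + q - 2 * t by ring]

lemma det_corr_three_eq_mul_sq (r a b : ℝ) {q : ℝ} (hq : q ≠ 0) (hq2 : q ^ 2 = 1 - r ^ 2) :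
    !![1, r, a; r, 1, b; a, b, 1].det =
      (1 - ![a, (b - r * a) / q] ⬝ᵥ ![a, (b - r * a) / q]) * q ^ 2 := by
  simp only [det_fin_three, of_apply, cons_val', cons_val_zero, cons_val_one, cons_val_fin_one,
    cons_val, dotProduct, Fin.sum_univ_two]
  field_simp
  rw [hq2]
  ring

section Completion

variable {ι : Type*}

def HasPosDefCompletion (E : ι → ι → Prop) (S : Matrix ι ι ℝ) : Prop :=
  ∃ M : Matrix ι ι ℝ, M.PosDef ∧ ∀ k l, E k l → M k l = S k l

lemma Matrix.PosDef.det_corr_three_pos {M : Matrix ι ι ℝ} (hM : M.PosDef) {a b i : ι}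
    (hab : a ≠ b) (hai : a ≠ i) (hbi : b ≠ i) (ha : M a a = 1) (hb : M b b = 1)
    (hi : M i i = 1) :
    0 < !![1, M a b, M a i; M a b, 1, M b i; M a i, M b i, 1].det := by
  have hinj : Function.Injective ![a, b, i] := by
    intro x y
    fin_cases x <;> fin_cases y <;> simp [hab, hai, hbi, hab.symm, hai.symm, hbi.symm]
  have hsub : M.submatrix ![a, b, i] ![a, b, i] =
      !![1, M a b, M a i; M a b, 1, M b i; M a i, M b i, 1] := by
    have hsymm : ∀ k l, M l k = M k l := fun k l => by simpa using hM.isHermitian.apply k l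
    ext x y
    fin_cases x <;> fin_cases y <;> simp [ha, hb, hi, hsymm a b, hsymm a i, hsymm b i]
  exact hsub ▸ (hM.submatrix hinj).det_pos

lemma exists_gram_vectors_of_det_corr_three_pos {a b : ι} (hab : a ≠ b) {A B : ι → ℝ} {r : ℝ}
    (hAa : A a = 1) (hBb : B b = 1) (hAb : A b = r) (hBa : B a = r) (hr : r ^ 2 < 1)
    (hdet : ∀ k, k ≠ a → k ≠ b → 0 < !![1, r, A k; r, 1, B k; A k, B k, 1].det) :
    ∃ y : ι → Fin 2 → ℝ, LinearIndepOn ℝ y {a, b} ∧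
      (∀ k, y a ⬝ᵥ y k = A k ∧ y b ⬝ᵥ y k = B k) ∧ ∀ k, k ≠ a → k ≠ b → y k ⬝ᵥ y k < 1 := by
  set q := √(1 - r ^ 2)
  have hq2 : q ^ 2 = 1 - r ^ 2 := sq_sqrt (by linarith)
  have hq : q ≠ 0 := (sqrt_pos.2 (by linarith)).ne'
  set y : ι → Fin 2 → ℝ := fun k => ![A k, (B k - r * A k) / q]
  have hya : y a = ![1, 0] := by simp [y, hAa, hBa]
  have hyb : y b = ![r, q] := by
    simp only [y, hBb, hAb]; congr; field_simp; rw [hq2]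
  refine ⟨y, ?_, fun k => ⟨?_, ?_⟩, fun k hka hkb => ?_⟩
  · rw [LinearIndepOn.pair_iff y hab, hya, hyb]
    intro c d h
    have h0 : c + d * r = 0 := by simpa using congrFun h 0
    have h1 : d * q = 0 := by simpa using congrFun h 1
    obtain rfl := (mul_eq_zero.1 h1).resolve_right hq
    simpa using h0
  · simp [hya, y, dotProduct]
  · rw [hyb]
    simp only [y, dotProduct, Fin.sum_univ_two, cons_val_zero, cons_val_one, cons_val_fin_one]
    field_simp
    ring
  · have := hdet k hka hkb
    rw [det_corr_three_eq_mul_sq r (A k) (B k) hq hq2] at this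
    linarith [pos_of_mul_pos_left this (sq_nonneg q)]

variable [Fintype ι] [DecidableEq ι]

lemma posDef_mul_transpose_add_diagonal {n : Type*} [Fintype n] (y : ι → n → ℝ) {e : ι → ℝ}
    {s : Finset ι} (he : ∀ k, 0 ≤ e k) (hes : ∀ k ∉ s, 0 < e k) (hy : LinearIndepOn ℝ y s) :
    (of y * (of y)ᵀ + diagonal e).PosDef := by
  refine .of_dotProduct_mulVec_pos
    ((isHermitian_mul_conjTranspose_self (of y)).add (isHermitian_diagonal e)) fun v hv => ?_
  have hquad : star v ⬝ᵥ ((of y * (of y)ᵀ + diagonal e) *ᵥ v) =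
      (v ᵥ* of y) ⬝ᵥ (v ᵥ* of y) + ∑ k, e k * v k ^ 2 := by
    rw [star_trivial, add_mulVec, dotProduct_add, ← mulVec_mulVec, dotProduct_mulVec,
      mulVec_transpose, dotProduct_mulVec]
    congr 1
    simp only [dotProduct, vecMul_diagonal]
    exact Finset.sum_congr rfl fun k _ => by ring
  have hgram : 0 ≤ (v ᵥ* of y) ⬝ᵥ (v ᵥ* of y) := by
    simpa using dotProduct_self_star_nonneg (v ᵥ* of y)
  have hdiag : 0 ≤ ∑ k, e k * v k ^ 2 := Finset.sum_nonneg fun k _ => by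
    have := he k; positivity
  rw [hquad]
  by_cases hvs : ∀ k ∉ s, v k = 0
  · have hvy : v ᵥ* of y ≠ 0 := by
      rw [vecMul_eq_sum, ← Finset.sum_subset s.subset_univ fun k _ hk => by simp [hvs k hk]]
      intro h0
      exact hv (funext fun k => if hk : k ∈ s then linearIndepOn_finset_iff.1 hy v h0 k hk
        else hvs k hk)
    have := dotProduct_self_star_pos_iff.2 hvy
    rw [star_trivial] at this
    linarith
  · push Not at hvs
    obtain ⟨k, hk, hvk⟩ := hvs
    have : 0 < ∑ k, e k * v k ^ 2 := Finset.sum_pos' (fun k _ => by have := he k; positivity)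
      ⟨k, Finset.mem_univ k, mul_pos (hes k hk) (by positivity)⟩
    linarith

lemma exists_posDef_corr_of_det_corr_three_pos {a b : ι} (hab : a ≠ b) {A B : ι → ℝ} {r : ℝ}
    (hAa : A a = 1) (hBb : B b = 1) (hAb : A b = r) (hBa : B a = r) (hr : r ^ 2 < 1)
    (hdet : ∀ k, k ≠ a → k ≠ b → 0 < !![1, r, A k; r, 1, B k; A k, B k, 1].det) :
    ∃ M : Matrix ι ι ℝ, M.PosDef ∧ ∀ k, M k k = 1 ∧ M a k = A k ∧ M b k = B k := by
  obtain ⟨y, hy, hrow, hlt⟩ :=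
    exists_gram_vectors_of_det_corr_three_pos hab hAa hBb hAb hBa hr hdet
  set e : ι → ℝ := fun k => 1 - y k ⬝ᵥ y k
  have hes : ∀ k ∉ ({a, b} : Finset ι), 0 < e k := fun k hk => by
    simp only [Finset.mem_insert, Finset.mem_singleton, not_or] at hk
    linarith [hlt k hk.1 hk.2]
  have he : ∀ k, 0 ≤ e k := fun k => by
    by_cases hk : k ∈ ({a, b} : Finset ι)
    · simp only [Finset.mem_insert, Finset.mem_singleton] at hk
      rcases hk with rfl | rfl
      · simp only [e, (hrow k).1, hAa, sub_self, le_refl]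
      · simp only [e, (hrow k).2, hBb, sub_self, le_refl]
    · exact (hes k hk).le
  have hoff : ∀ k l, k ≠ l → (of y * (of y)ᵀ + diagonal e) k l = y k ⬝ᵥ y l := by
    intro k l hkl; simp [mul_apply, dotProduct, hkl]
  have hdiag : ∀ k, (of y * (of y)ᵀ + diagonal e) k k = 1 := fun k => by
    simp [mul_apply, dotProduct, e]
  refine ⟨_, posDef_mul_transpose_add_diagonal y he hes (by rwa [Finset.coe_pair]),
    fun k => ⟨hdiag k, ?_, ?_⟩⟩
  · rcases eq_or_ne a k with rfl | hak
    · rw [hdiag, hAa]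
    · rw [hoff a k hak, (hrow k).1]
  · rcases eq_or_ne b k with rfl | hbk
    · rw [hdiag, hBb]
    · rw [hoff b k hbk, (hrow k).2]

lemma HasPosDefCompletion.scale {E : ι → ι → Prop} {S : Matrix ι ι ℝ}
    (h : HasPosDefCompletion E S) {d : ι → ℝ} (hd : ∀ k, d k ≠ 0) :
    HasPosDefCompletion E (of fun k l => d k * S k l * d l) := by
  obtain ⟨M, hM, hME⟩ := h
  have hD : IsUnit (diagonal d) := isUnit_diagonal.2 (Pi.isUnit_iff.2 fun k => (hd k).isUnit)
  have hDstar : star (diagonal d) = diagonal d := by simp [star_eq_conjTranspose]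
  refine ⟨diagonal d * M * diagonal d, ?_, fun k l hkl => by simp [hME k l hkl]⟩
  simpa [hDstar] using (IsUnit.posDef_star_right_conjugate_iff hD).2 hM

lemma hasPosDefCompletion_scale_iff {E : ι → ι → Prop} {S : Matrix ι ι ℝ} {d : ι → ℝ}
    (hd : ∀ k, d k ≠ 0) :
    HasPosDefCompletion E (of fun k l => d k * S k l * d l) ↔ HasPosDefCompletion E S := by
  refine ⟨fun h => ?_, (·.scale hd)⟩
  convert h.scale (d := fun k => (d k)⁻¹) (fun k => inv_ne_zero (hd k))
  ext k l
  simp only [of_apply]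
  field_simp [hd k, hd l]

end Completion

lemma Fin.two_le_val_iff {m : ℕ} {i : Fin (m + 2)} : 2 ≤ i.val ↔ i ≠ 0 ∧ i ≠ 1 := by
  simp only [ne_eq, Fin.ext_iff, Fin.val_zero, Fin.val_one]; omega

lemma Fin.val_lt_two_iff {m : ℕ} {i : Fin (m + 2)} : i.val < 2 ↔ i = 0 ∨ i = 1 := by
  rw [← not_le, Fin.two_le_val_iff]; tauto

def K2mPattern (m : ℕ) (k l : Fin (m + 2)) : Prop :=
  k = l ∨ (k.val < 2 ∧ 2 ≤ l.val) ∨ (l.val < 2 ∧ 2 ≤ k.val)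

section K2m

variable {m : ℕ} {φ : Fin (m + 2) → ℝ}

lemma HasPosDefCompletion.exists_mem_uIoo_cos
    (h : HasPosDefCompletion (K2mPattern m) (of fun k l => cos (φ k - φ l))) :
    ∃ r, ∀ i : Fin (m + 2), 2 ≤ i.val →
      r ∈ uIoo (cos (φ 0 - φ 1)) (cos (φ 0 + φ 1 - 2 * φ i)) := by
  obtain ⟨M, hM, hME⟩ := h
  have hdiag : ∀ k, M k k = 1 := fun k => by simp [hME k k (.inl rfl)]
  refine ⟨M 0 1, fun i hi => ?_⟩
  obtain ⟨hi0, hi1⟩ := Fin.two_le_val_iff.1 hi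
  have := hM.det_corr_three_pos (by simp) hi0.symm hi1.symm (hdiag 0) (hdiag 1) (hdiag i)
  rwa [hME 0 i (.inr (.inl ⟨by simp, hi⟩)), hME 1 i (.inr (.inl ⟨by simp, hi⟩)), of_apply,
    of_apply, det_corr_three_cos_sub_pos_iff] at this

lemma hasPosDefCompletion_of_mem_uIoo_cos {r : ℝ} (hr : r ^ 2 < 1)
    (hrV : ∀ i : Fin (m + 2), 2 ≤ i.val →
      r ∈ uIoo (cos (φ 0 - φ 1)) (cos (φ 0 + φ 1 - 2 * φ i))) :
    HasPosDefCompletion (K2mPattern m) (of fun k l => cos (φ k - φ l)) := by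
  have h01 : (0 : Fin (m + 2)) ≠ 1 := by simp
  obtain ⟨M, hM, hMk⟩ := exists_posDef_corr_of_det_corr_three_pos h01
    (A := Function.update (fun k => cos (φ 0 - φ k)) 1 r)
    (B := Function.update (fun k => cos (φ 1 - φ k)) 0 r) (by simp [h01]) (by simp [h01.symm])
    (by simp) (by simp) hr fun k hk0 hk1 => by
      simpa [hk0, hk1, det_corr_three_cos_sub_pos_iff] using
        hrV k (Fin.two_le_val_iff.2 ⟨hk0, hk1⟩)
  have hsymm : ∀ k l, M l k = M k l := fun k l => by simpa using hM.isHermitian.apply k l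
  have hedge : ∀ a i : Fin (m + 2), a.val < 2 → 2 ≤ i.val → M a i = cos (φ a - φ i) := by
    intro a i ha hi
    obtain ⟨hi0, hi1⟩ := Fin.two_le_val_iff.1 hi
    obtain rfl | rfl := Fin.val_lt_two_iff.1 ha
    · simpa [hi1] using (hMk i).2.1
    · simpa [hi0] using (hMk i).2.2
  refine ⟨M, hM, ?_⟩
  rintro k l (rfl | ⟨hk, hl⟩ | ⟨hl, hk⟩)
  · simp [(hMk k).1]
  · exact hedge k l hk hl
  · rw [hsymm, hedge l k hl hk, of_apply, ← cos_neg, neg_sub]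

theorem hasPosDefCompletion_K2mPattern_cos_iff (hφ : ∀ k, φ k ∈ Ico 0 π)
    (hinj : Function.Injective φ) :
    HasPosDefCompletion (K2mPattern m) (of fun k l => cos (φ k - φ l)) ↔
      (∀ i : Fin (m + 2), 2 ≤ i.val → φ i ∈ uIoo (φ 0) (φ 1)) ∨
        ∀ i : Fin (m + 2), 2 ≤ i.val → φ i ∉ uIoo (φ 0) (φ 1) := by
  have hne : ∀ i : Fin (m + 2), 2 ≤ i.val → φ 0 ≠ φ i ∧ φ 1 ≠ φ i := fun i hi =>
    (Fin.two_le_val_iff.1 hi).imp (hinj.ne ·.symm) (hinj.ne ·.symm)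
  have hin := fun i => cos_sub_lt_cos_add_sub_iff (hφ 0) (hφ 1) (hφ i)
  have hout := fun i (hi : 2 ≤ i.val) =>
    cos_add_sub_lt_cos_sub_iff (hφ 0) (hφ 1) (hφ i) (hne i hi).1 (hne i hi).2
  constructor
  · intro h
    obtain ⟨r, hr⟩ := h.exists_mem_uIoo_cos
    by_contra! h
    obtain ⟨⟨i, hi, hi'⟩, j, hj, hj'⟩ := h
    have hri := hr i hi
    have hrj := hr j hj
    rw [uIoo_of_gt ((hout i hi).2 hi')] at hri
    rw [uIoo_of_lt ((hin j).2 hj')] at hrj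
    exact hri.2.not_gt hrj.1
  · intro h
    have hu : cos (φ 0 - φ 1) ^ 2 < 1 := cos_sq_lt_one_of_abs_lt_pi
      (abs_sub_lt_pi_of_mem_Ico (hφ 0) (hφ 1)) (sub_ne_zero.2 (hinj.ne (by simp)))
    obtain ⟨r, hr, hrV⟩ :=
      exists_sq_lt_one_forall_mem_uIoo (toFinite {i : Fin (m + 2) | 2 ≤ i.val}) hu
        (h.imp (fun h i hi => (hin i).2 (h i hi)) fun h i hi => (hout i hi).2 (h i hi))
    exact hasPosDefCompletion_of_mem_uIoo_cos hr hrV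

end K2m

theorem K2m_mle_exists_iff_neighbors_general {m : ℕ}
    (x : Fin (m + 2) → Fin 2 → ℝ) (φ : Fin (m + 2) → ℝ)
    (hx : ∀ k l : Fin (m + 2), k ≠ l → LinearIndependent ℝ ![x k, x l])
    (hφmem : ∀ k, φ k ∈ Set.Ico 0 π)
    (hangle : ∀ k, ∃ c : ℝ, c ≠ 0 ∧ x k = c • ![cos (φ k), sin (φ k)]) :
    (∃ Sigma : Matrix (Fin (m + 2)) (Fin (m + 2)) ℝ, Sigma.PosDef ∧
      (∀ k : Fin (m + 2), Sigma k k = x k ⬝ᵥ x k) ∧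
      (∀ k l : Fin (m + 2),
        ((k.val < 2 ∧ 2 ≤ l.val) ∨ (l.val < 2 ∧ 2 ≤ k.val)) →
          Sigma k l = x k ⬝ᵥ x l)) ↔
    ((∀ i : Fin (m + 2), 2 ≤ i.val →
        min (φ 0) (φ 1) < φ i ∧ φ i < max (φ 0) (φ 1)) ∨
     (∀ i : Fin (m + 2), 2 ≤ i.val →
        ¬ (min (φ 0) (φ 1) < φ i ∧ φ i < max (φ 0) (φ 1)))) := by
  choose c hc hxc using hangle
  have hgram : ∀ k l, x k ⬝ᵥ x l = c k * cos (φ k - φ l) * c l := fun k l => by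
    simp only [hxc, dotProduct, Fin.sum_univ_two, Pi.smul_apply, smul_eq_mul, cos_sub,
      cons_val_zero, cons_val_one, cons_val_fin_one]
    ring
  have hinj : Function.Injective φ := by
    intro k l hkl
    by_contra hne
    refine hc l (LinearIndependent.pair_iff.1 (hx k l hne) (c l) (-c k) ?_).1
    rw [hxc k, hxc l, hkl, smul_smul, smul_smul, mul_comm, neg_mul, neg_smul, add_neg_cancel]
  refine Iff.trans ?_ ((hasPosDefCompletion_scale_iff hc).trans
    (hasPosDefCompletion_K2mPattern_cos_iff hφmem hinj))
  simp only [HasPosDefCompletion, K2mPattern, of_apply, ← hgram]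
  exact ⟨fun ⟨M, hM, hd, he⟩ => ⟨M, hM, fun k l hkl => hkl.elim (· ▸ hd k) (he k l)⟩,
    fun ⟨M, hM, hME⟩ => ⟨M, hM, fun k => hME k k (.inl rfl), fun k l h => hME k l (.inr h)⟩⟩

theorem K2m_mle_exists_iff_neighbors {m : ℕ} (hm : 1 ≤ m)
    (x : Fin (m + 2) → Fin 2 → ℝ) (φ : Fin (m + 2) → ℝ)
    (hx : ∀ k l : Fin (m + 2), k ≠ l → LinearIndependent ℝ ![x k, x l])
    (hφmem : ∀ k, φ k ∈ Set.Ico 0 π)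
    (hangle : ∀ k, ∃ c : ℝ, c ≠ 0 ∧ x k = c • ![cos (φ k), sin (φ k)]) :
    (∃ Sigma : Matrix (Fin (m + 2)) (Fin (m + 2)) ℝ, Sigma.PosDef ∧
      (∀ k : Fin (m + 2), Sigma k k = x k ⬝ᵥ x k) ∧
      (∀ k l : Fin (m + 2),
        ((k.val < 2 ∧ 2 ≤ l.val) ∨ (l.val < 2 ∧ 2 ≤ k.val)) →
          Sigma k l = x k ⬝ᵥ x l)) ↔
    ((∀ i : Fin (m + 2), 2 ≤ i.val →
        min (φ 0) (φ 1) < φ i ∧ φ i < max (φ 0) (φ 1)) ∨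
     (∀ i : Fin (m + 2), 2 ≤ i.val →
        ¬ (min (φ 0) (φ 1) < φ i ∧ φ i < max (φ 0) (φ 1)))) :=
  K2m_mle_exists_iff_neighbors_general x φ hx hφmem hangle
end

section
/- Let m ≥ 1, let A = {1,2} and B = {3,…,m+2}, and let Σ be a positive definite real (m+2)×(m+2) matrix with Σ₁₁ = Σ₂₂ = 1 and Σ₁₂ = y (so y² < 1). Suppose the inverse K = Σ⁻¹ satisfies K_{ij} = 0 for all i ≠ j with i, j ∈ B (i.e., the B×B block of K is diagonal). Then for all i ≠ j in B, Σ_{ij} = (Σ_{1i}Σ_{1j} + Σ_{2i}Σ_{2j} − y(Σ_{1i}Σ_{2j} + Σ_{1j}Σ_{2i}))/(1 − y²). -/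
/-!
Column `j` of `Σ K = 1` gives `Σ a 0 * K 0 j + Σ a 1 * K 1 j + Σ a j * K j j = 0` for every
`a ≠ j`, since `K k j = 0` for the other `k ∈ B`. Taking `a = 0, 1, i` exhibits a nonzero kernel
vector (`K j j > 0`) of a `3 × 3` matrix, and the vanishing of its determinant is the claimed
formula; `1 - y² > 0` because the leading `2 × 2` minor of `Σ` is positive.
-/

open Matrix

namespace Matrix

lemma PosDef.apply_sq_lt_mul {n : Type*} [Fintype n] {M : Matrix n n ℝ} (hM : M.PosDef)
    {a b : n} (hab : a ≠ b) : M a b ^ 2 < M a a * M b b := by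
  have hinj : Function.Injective ![a, b] := by
    intro p q; fin_cases p <;> fin_cases q <;> simp [hab, hab.symm]
  have hdet := (hM.submatrix hinj).det_pos
  have hsymm : M b a = M a b := by simpa using hM.isHermitian.apply a b
  rw [det_fin_two] at hdet
  simp only [submatrix_apply, cons_val_zero, cons_val_one, hsymm] at hdet
  nlinarith

lemma mul_apply_eq_sum_of_col_support {l n o R : Type*} [Fintype n] [NonUnitalNonAssocSemiring R]
    {M : Matrix l n R} {N : Matrix n o R} {s : Finset n} {j : o}
    (hN : ∀ k ∉ s, N k j = 0) (a : l) : (M * N) a j = ∑ k ∈ s, M a k * N k j := by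
  rw [mul_apply]
  refine (Finset.sum_subset (Finset.subset_univ s) fun k _ hk => ?_).symm
  rw [hN k hk, mul_zero]

lemma three_term_row_eq_zero_of_mul_eq_one {n R : Type*} [Fintype n] [DecidableEq n]
    [NonAssocSemiring R] {M N : Matrix n n R} (hMN : M * N = 1) {p q j : n}
    (hpq : p ≠ q) (hpj : p ≠ j) (hqj : q ≠ j) (hN : ∀ k, k ≠ p → k ≠ q → k ≠ j → N k j = 0)
    {a : n} (ha : a ≠ j) : M a p * N p j + M a q * N q j + M a j * N j j = 0 := by
  have hsupp : ∀ k ∉ ({p, q, j} : Finset n), N k j = 0 := by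
    intro k hk
    simp only [Finset.mem_insert, Finset.mem_singleton, not_or] at hk
    exact hN k hk.1 hk.2.1 hk.2.2
  have := mul_apply_eq_sum_of_col_support (M := M) hsupp a
  rwa [hMN, one_apply_ne ha, Finset.sum_insert (by simp [hpq, hpj]),
    Finset.sum_insert (by simp [hqj]), Finset.sum_singleton, ← add_assoc, eq_comm] at this

end Matrix

lemma Fin.two_le_val {m : ℕ} {k : Fin (m + 2)} (h0 : k ≠ 0) (h1 : k ≠ 1) : 2 ≤ k.val := by
  rw [Ne, Fin.ext_iff] at h0 h1
  simp only [Fin.val_zero, Fin.val_one] at h0 h1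
  omega

lemma eq_div_one_sub_sq_of_kernel {K : Type*} [Field K] {y a b c d x u v w : K}
    (hy : 1 - y ^ 2 ≠ 0) (hw : w ≠ 0)
    (h0 : u + y * v + c * w = 0) (h1 : y * u + v + d * w = 0) (h2 : a * u + b * v + x * w = 0) :
    x = (a * c + b * d - y * (a * d + c * b)) / (1 - y ^ 2) := by
  rw [eq_div_iff hy]
  apply mul_right_cancel₀ hw
  linear_combination (1 - y ^ 2) * h2 - a * h0 + y * a * h1 - b * h1 + y * b * h0

theorem schur_diag_entries_general {m : ℕ}
    (Sigma : Matrix (Fin (m + 2)) (Fin (m + 2)) ℝ) (hpd : Sigma.PosDef)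
    (h00 : Sigma 0 0 = 1) (h11 : Sigma 1 1 = 1)
    (hK : ∀ i j : Fin (m + 2), 2 ≤ i.val → 2 ≤ j.val → i ≠ j → Sigma⁻¹ i j = 0) :
    ∀ i j : Fin (m + 2), 2 ≤ i.val → 2 ≤ j.val → i ≠ j →
      Sigma i j =
        (Sigma 0 i * Sigma 0 j + Sigma 1 i * Sigma 1 j -
          Sigma 0 1 * (Sigma 0 i * Sigma 1 j + Sigma 0 j * Sigma 1 i)) /
        (1 - Sigma 0 1 ^ 2) := by
  intro i j _ hj hij
  have hsymm (a b : Fin (m + 2)) : Sigma a b = Sigma b a := by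
    simpa using (hpd.isHermitian.apply a b).symm
  have h01 : (0 : Fin (m + 2)) ≠ 1 := by simp
  have h0j : (0 : Fin (m + 2)) ≠ j := by rintro rfl; simp at hj
  have h1j : (1 : Fin (m + 2)) ≠ j := by rintro rfl; simp at hj
  have hy : 1 - Sigma 0 1 ^ 2 ≠ 0 := by
    have := hpd.apply_sq_lt_mul h01
    rw [h00, h11] at this
    linarith
  have hrow {a : Fin (m + 2)} (ha : a ≠ j) :=
    three_term_row_eq_zero_of_mul_eq_one
      (mul_nonsing_inv _ ((isUnit_iff_isUnit_det _).mp hpd.isUnit)) h01 h0j h1j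
      (fun k hk0 hk1 hkj => hK k j (Fin.two_le_val hk0 hk1) hj hkj) ha
  have e0 := hrow h0j
  have e1 := hrow h1j
  have ei := hrow hij
  rw [h00, one_mul] at e0
  rw [hsymm 1 0, h11, one_mul] at e1
  rw [hsymm i 0, hsymm i 1] at ei
  exact eq_div_one_sub_sq_of_kernel hy hpd.inv.diag_pos.ne' e0 e1 ei

theorem schur_diag_entries {m : ℕ} (hm : 1 ≤ m)
    (Sigma : Matrix (Fin (m + 2)) (Fin (m + 2)) ℝ) (hpd : Sigma.PosDef)
    (h00 : Sigma 0 0 = 1) (h11 : Sigma 1 1 = 1)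
    (hK : ∀ i j : Fin (m + 2), 2 ≤ i.val → 2 ≤ j.val → i ≠ j → Sigma⁻¹ i j = 0) :
    ∀ i j : Fin (m + 2), 2 ≤ i.val → 2 ≤ j.val → i ≠ j →
      Sigma i j =
        (Sigma 0 i * Sigma 0 j + Sigma 1 i * Sigma 1 j -
          Sigma 0 1 * (Sigma 0 i * Sigma 1 j + Sigma 0 j * Sigma 1 i)) /
        (1 - Sigma 0 1 ^ 2) :=
  schur_diag_entries_general Sigma hpd h00 h11 hK
end

section
/- Let X₁, X₂, X₃, X₄ be independent real Gaussian random variables with mean zero, where X₁ and X₂ have common variance σ² > 0 and X₃ and X₄ have common variance τ² > 0. Then the probability of the event { (|X₁| > |X₂| and |X₃| > |X₄|) or (|X₁| < |X₂| and |X₃| < |X₄|) } equals 1/2. (Hence, in the Frets's heads colored Gaussian graphical model, if the true covariance matrix Σ is diagonal, the MLE exists with probability exactly 0.5 for one observation.) -/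
/-!
Swapping the first two coordinates preserves the law (they have the same variance) and
exchanges the event with the one where the comparison between `|X₀|` and `|X₁|` is reversed.
These two events are disjoint, and together they miss only the null set where
`|X₀| = |X₁|` or `|X₂| = |X₃|`, so each has probability `1/2`.
-/

open MeasureTheory ProbabilityTheory

namespace MeasureTheory

variable {α β : Type*} [MeasurableSpace α] [MeasurableSpace β]

theorem Measure.prod_setOf_fst_eq_null [MeasurableEq α] (μ : Measure α) [SFinite μ]
    [NullSingletonClass μ] (ν : Measure β) [SFinite ν] {g : β → α} (hg : Measurable g) :
    μ.prod ν {p | p.1 = g p.2} = 0 := by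
  have hmeas : MeasurableSet {p : α × β | p.1 = g p.2} :=
    measurableSet_eq_fun measurable_fst (hg.comp measurable_snd)
  rw [Measure.prod_apply_symm hmeas]
  simp

theorem Measure.pi_setOf_eval_eq_null [MeasurableEq α] {n : ℕ} (ν : Fin (n + 1) → Measure α)
    [∀ i, SigmaFinite (ν i)] {i j : Fin (n + 1)} (hij : j ≠ i) [NullSingletonClass (ν i)]
    {f : α → α} (hf : Measurable f) :
    Measure.pi ν {x | x i = f (x j)} = 0 := by
  obtain ⟨k, rfl⟩ := Fin.exists_succAbove_eq hij
  have hpre : {x | x i = f (x (i.succAbove k))} =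
      MeasurableEquiv.piFinSuccAbove (fun _ => α) i ⁻¹' {p | p.1 = f (p.2 k)} := rfl
  have hmeas : MeasurableSet {p : α × (Fin n → α) | p.1 = f (p.2 k)} :=
    measurableSet_eq_fun measurable_fst (by fun_prop)
  rw [hpre, (measurePreserving_piFinSuccAbove ν i).measure_preimage hmeas.nullMeasurableSet]
  exact Measure.prod_setOf_fst_eq_null _ _ (g := fun y : Fin n → α => f (y k)) (by fun_prop)

theorem Measure.pi_setOf_abs_eval_eq_null {n : ℕ} (ν : Fin (n + 1) → Measure ℝ)
    [∀ i, SigmaFinite (ν i)] {i j : Fin (n + 1)} (hij : j ≠ i) [NullSingletonClass (ν i)] :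
    Measure.pi ν {x | |x i| = |x j|} = 0 := by
  refine measure_mono_null (fun x hx => abs_eq_abs.mp hx) (measure_union_null ?_ ?_)
  · exact Measure.pi_setOf_eval_eq_null ν hij measurable_id
  · exact Measure.pi_setOf_eval_eq_null ν hij measurable_neg

theorem measurePreserving_comp_perm {ι : Type*} [Fintype ι] (ν : ι → Measure α)
    [∀ i, SigmaFinite (ν i)] (σ : Equiv.Perm ι) (hσ : ∀ i, ν (σ i) = ν i) :
    MeasurePreserving (fun x : ι → α => x ∘ σ) (Measure.pi ν) (Measure.pi ν) := by
  have hν : (fun i => ν (σ.symm i)) = ν := funext fun i => by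
    simpa using (hσ (σ.symm i)).symm
  convert measurePreserving_piCongrLeft (α := fun _ => α) ν σ.symm using 1
  · ext x i
    simp [MeasurableEquiv.coe_piCongrLeft, Equiv.piCongrLeft_apply]
  · rw [hν]

theorem measure_eq_half_of_measurePreserving {μ : Measure α} [IsProbabilityMeasure μ]
    {T : α → α} (hT : MeasurePreserving T μ μ) {s : Set α} (hs : MeasurableSet s)
    (hdisj : Disjoint s (T ⁻¹' s)) (hcover : μ (s ∪ T ⁻¹' s)ᶜ = 0) :
    μ s = 1 / 2 := by
  have hTs : μ (T ⁻¹' s) = μ s := hT.measure_preimage hs.nullMeasurableSet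
  have hsum : μ s + μ s = 1 := by
    rwa [prob_compl_eq_zero_iff (hs.union (hT.measurable hs)), measure_union hdisj
      (hT.measurable hs), hTs] at hcover
  rw [ENNReal.eq_div_iff two_ne_zero ENNReal.ofNat_ne_top, two_mul, hsum]

end MeasureTheory

theorem frets_heads_diagonal_probability (v₁ v₂ : NNReal)
    (hv₁ : 0 < v₁) (hv₂ : 0 < v₂) :
    (Measure.pi fun i : Fin 4 =>
        gaussianReal 0 (if i.val < 2 then v₁ else v₂))
      {x : Fin 4 → ℝ |
        (|x 0| > |x 1| ∧ |x 2| > |x 3|) ∨ (|x 0| < |x 1| ∧ |x 2| < |x 3|)} =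
    1 / 2 := by
  set ν : Fin 4 → Measure ℝ := fun i => gaussianReal 0 (if i.val < 2 then v₁ else v₂)
  have hatomless (i : Fin 4) : NullSingletonClass (ν i) :=
    nullSingletonClass_gaussianReal (by split_ifs; exacts [hv₁.ne', hv₂.ne'])
  have hswap (i : Fin 4) : ν (Equiv.swap 0 1 i) = ν i := by
    fin_cases i <;> simp [ν, Equiv.swap_apply_of_ne_of_ne]
  refine measure_eq_half_of_measurePreserving
    (measurePreserving_comp_perm ν (Equiv.swap 0 1) hswap) (by measurability) ?_ ?_
  · exact Set.disjoint_left.2 fun x hx hx' => by grind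
  · refine measure_mono_null (fun x hx => ?_) (measure_union_null
      (Measure.pi_setOf_abs_eval_eq_null ν (i := 0) (j := 1) (by decide))
      (Measure.pi_setOf_abs_eval_eq_null ν (i := 2) (j := 3) (by decide)))
    simp only [Set.mem_compl_iff, Set.mem_union, Set.mem_preimage, Set.mem_ofPred_eq,
      Function.comp_apply] at hx ⊢
    grind
end
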